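/- arXiv:1608.01354 — 9 statements merged into one kernel-verified Lean document; each statement's English description precedes it below -/
import Mathlib

section
/- Let n ≥ 1 and d ≥ 1 be integers and let j : Fin n → ℕ satisfy Σ_k j(k) = d. Then the supremum of ∏_{k} |x_k|^{2·j(k)} over all x ∈ ℂⁿ with Σ_k |x_k|² = 1 equals (∏_k j(k)^{j(k)}) / d^d (with the convention 0^0 = 1), and this supremum is attained (namely at any x with |x_k|² = j(k)/d for all k). -/
/-!
Writing `a k = ‖x k‖ ^ 2`, the quantity is `∏ a k ^ j k` on the simplex `∑ a k = 1`. With the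
weights `w k = j k / d`, Gibbs' inequality `∏ a k ^ w k ≤ ∏ w k ^ w k` is weighted AM-GM applied
to the ratios `a k / w k`; raising it to the `d`-th power gives the bound, with equality at `a = w`.
-/

open Finset

namespace Real

theorem prod_rpow_le_prod_rpow_self {ι : Type*} (s : Finset ι) {w a : ι → ℝ}
    (hw : ∀ i ∈ s, 0 ≤ w i) (hw₁ : ∑ i ∈ s, w i = 1) (ha : ∀ i ∈ s, 0 ≤ a i)
    (ha₁ : ∑ i ∈ s, a i ≤ 1) :
    ∏ i ∈ s, a i ^ w i ≤ ∏ i ∈ s, w i ^ w i := by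
  -- `0 ^ 0 = 1` makes the factorisation valid also where `w i = 0`.
  have hsplit : ∀ i ∈ s, a i ^ w i = (a i / w i) ^ w i * w i ^ w i := fun i hi => by
    rcases (hw i hi).eq_or_lt with h | h
    · simp [← h]
    · rw [← mul_rpow (div_nonneg (ha i hi) h.le) h.le, div_mul_cancel₀ _ h.ne']
  have hratio : ∏ i ∈ s, (a i / w i) ^ w i ≤ 1 :=
    calc ∏ i ∈ s, (a i / w i) ^ w i
        ≤ ∑ i ∈ s, w i * (a i / w i) := geom_mean_le_arith_mean_weighted s w _ hw hw₁
          fun i hi => div_nonneg (ha i hi) (hw i hi)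
      _ ≤ ∑ i ∈ s, a i := sum_le_sum fun i hi => by
          rcases (hw i hi).eq_or_lt with h | h
          · simpa [← h] using ha i hi
          · rw [mul_div_cancel₀ _ h.ne']
      _ ≤ 1 := ha₁
  rw [prod_congr rfl hsplit, prod_mul_distrib]
  exact mul_le_of_le_one_left (prod_nonneg fun i hi => rpow_nonneg (hw i hi) _) hratio

end Real

theorem prod_pow_le_prod_div_pow {ι : Type*} (s : Finset ι) (j : ι → ℕ)
    (hd : ∑ i ∈ s, j i ≠ 0) {a : ι → ℝ} (ha : ∀ i ∈ s, 0 ≤ a i) (ha₁ : ∑ i ∈ s, a i ≤ 1) :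
    ∏ i ∈ s, a i ^ j i ≤ ∏ i ∈ s, ((j i : ℝ) / ∑ i ∈ s, j i) ^ j i := by
  set d := ∑ i ∈ s, j i
  have hd' : (d : ℝ) ≠ 0 := Nat.cast_ne_zero.2 hd
  have hw₁ : ∑ i ∈ s, (j i : ℝ) / d = 1 := by
    rw [← sum_div, ← Nat.cast_sum, div_self hd']
  have hpow : ∀ b : ι → ℝ, (∀ i ∈ s, 0 ≤ b i) →
      ∏ i ∈ s, b i ^ j i = (∏ i ∈ s, b i ^ ((j i : ℝ) / d)) ^ d := fun b hb => by
    rw [← prod_pow]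
    refine prod_congr rfl fun i hi => ?_
    rw [← Real.rpow_mul_natCast (hb i hi), div_mul_cancel₀ _ hd', Real.rpow_natCast]
  have hw : ∀ i ∈ s, (0 : ℝ) ≤ j i / d := fun i _ => by positivity
  rw [hpow a ha, hpow _ hw]
  exact pow_le_pow_left₀ (prod_nonneg fun i hi => Real.rpow_nonneg (ha i hi) _)
    (Real.prod_rpow_le_prod_rpow_self s hw hw₁ ha ha₁) d

theorem stmt_0_general (n d : ℕ) (hd : 1 ≤ d) (j : Fin n → ℕ)
    (hj : ∑ k, j k = d) :
    IsGreatest {r : ℝ | ∃ x : Fin n → ℂ, (∑ k, ‖x k‖ ^ 2) = 1 ∧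
        r = ∏ k, ‖x k‖ ^ (2 * j k)}
      ((∏ k, (j k : ℝ) ^ (j k)) / (d : ℝ) ^ d) ∧
    ∀ x : Fin n → ℂ, (∀ k, ‖x k‖ ^ 2 = (j k : ℝ) / d) →
      (∏ k, ‖x k‖ ^ (2 * j k)) = (∏ k, (j k : ℝ) ^ (j k)) / (d : ℝ) ^ d := by
  have hvalue : ∏ k, ((j k : ℝ) / d) ^ j k = (∏ k, (j k : ℝ) ^ j k) / (d : ℝ) ^ d := by
    rw [prod_congr rfl fun k _ => div_pow _ _ _, prod_div_distrib, prod_pow_eq_pow_sum, hj]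
  have hattained : ∀ x : Fin n → ℂ, (∀ k, ‖x k‖ ^ 2 = (j k : ℝ) / d) →
      (∏ k, ‖x k‖ ^ (2 * j k)) = (∏ k, (j k : ℝ) ^ (j k)) / (d : ℝ) ^ d := fun x hx => by
    simp only [pow_mul, hx, hvalue]
  set x₀ : Fin n → ℂ := fun k => (√((j k : ℝ) / d) : ℂ)
  have hx₀ : ∀ k, ‖x₀ k‖ ^ 2 = (j k : ℝ) / d := fun k => by
    rw [Complex.norm_real, Real.norm_eq_abs, sq_abs, Real.sq_sqrt (by positivity)]
  refine ⟨⟨⟨x₀, ?_, (hattained x₀ hx₀).symm⟩, ?_⟩, hattained⟩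
  · rw [sum_congr rfl fun k _ => hx₀ k, ← sum_div, ← Nat.cast_sum, hj,
      div_self (by positivity)]
  · rintro r ⟨x, hx₁, rfl⟩
    rw [← hvalue]
    simp only [pow_mul, ← hj]
    exact prod_pow_le_prod_div_pow univ j (by omega) (fun k _ => by positivity) hx₁.le

/-- The supremum of ∏_k |x_k|^(2 j_k) over the unit sphere of ℂⁿ equals
(∏_k j_k^{j_k}) / d^d, and it is attained at any x with |x_k|² = j_k/d. -/
theorem stmt_0 (n d : ℕ) (hn : 1 ≤ n) (hd : 1 ≤ d) (j : Fin n → ℕ)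
    (hj : ∑ k, j k = d) :
    IsGreatest {r : ℝ | ∃ x : Fin n → ℂ, (∑ k, ‖x k‖ ^ 2) = 1 ∧
        r = ∏ k, ‖x k‖ ^ (2 * j k)}
      ((∏ k, (j k : ℝ) ^ (j k)) / (d : ℝ) ^ d) ∧
    ∀ x : Fin n → ℂ, (∀ k, ‖x k‖ ^ 2 = (j k : ℝ) / d) →
      (∏ k, ‖x k‖ ^ (2 * j k)) = (∏ k, (j k : ℝ) ^ (j k)) / (d : ℝ) ^ d :=
  stmt_0_general n d hd j hj
end

section
/- For all natural numbers a, b with a + 2 ≤ b, the strict inequality (a! · b!) · ((a+1)^{a+1} · (b-1)^{b-1}) < ((a+1)! · (b-1)!) · (a^a · b^b) holds (with the convention 0^0 = 1); equivalently, a!·b!/(a^a·b^b) < (a+1)!·(b-1)!/((a+1)^{a+1}·(b-1)^{b-1}) as positive rationals. -/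
/-!
The inequality says `e a < e (b - 1)` for `e n = ((n + 1) / n) ^ n`, once the factorials are
cleared. With `0 ^ 0 = 1` the sequence `e` starts `1 < 2`, and it is strictly increasing: we have
`e (n + 1) / e n = ((n + 1) / n) * (1 - 1 / (n + 1) ^ 2) ^ (n + 1)`, and the strict Bernoulli
inequality bounds the power from below by `1 - 1 / (n + 1) = n / (n + 1)`.
-/

theorem one_add_mul_lt_pow {R : Type*} [CommRing R] [LinearOrder R] [IsStrictOrderedRing R]
    {a : R} (ha : -1 ≤ a) (ha0 : a ≠ 0) {n : ℕ} (hn : 2 ≤ n) :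
    1 + n * a < (1 + a) ^ n := by
  obtain ⟨m, rfl⟩ : ∃ m, n = m + 1 := ⟨n - 1, by omega⟩
  have hm : (0 : R) < m := by exact_mod_cast (by omega : 0 < m)
  have hsq : 0 < m * a ^ 2 := by positivity
  calc 1 + ((m + 1 : ℕ) : R) * a < 1 + (m + 1) * a + m * a ^ 2 := by push_cast; linarith
    _ = (1 + m * a) * (1 + a) := by ring
    _ ≤ (1 + a) ^ m * (1 + a) := by
        gcongr
        · linarith
        · exact one_add_mul_le_pow (by linarith) m
    _ = (1 + a) ^ (m + 1) := (pow_succ _ _).symm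

section

variable {K : Type*} [Field K] [LinearOrder K] [IsStrictOrderedRing K]

theorem add_one_div_self_pow_lt_succ {n : ℕ} (hn : 0 < n) :
    ((n + 1 : K) / n) ^ n < ((n + 1 + 1 : K) / (n + 1)) ^ (n + 1) := by
  have hx : (0 : K) < n := by exact_mod_cast hn
  have hbern : 1 + (n + 1 : ℕ) * (-1 / ((n : K) + 1) ^ 2) <
      (1 + -1 / ((n : K) + 1) ^ 2) ^ (n + 1) := by
    refine one_add_mul_lt_pow ?_ (by simp; positivity) (by omega)
    rw [neg_div, neg_le_neg_iff, div_le_one (by positivity)]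
    nlinarith
  have hunit : (n + 1 : K) / n * (1 + (n + 1 : ℕ) * (-1 / ((n : K) + 1) ^ 2)) = 1 := by
    push_cast
    field_simp
    ring
  have hleft : ((n + 1 : K) / n) ^ n =
      ((n + 1 : K) / n) ^ (n + 1) * (1 + (n + 1 : ℕ) * (-1 / ((n : K) + 1) ^ 2)) := by
    rw [pow_succ, mul_assoc, hunit, mul_one]
  have hright : ((n + 1 + 1 : K) / (n + 1)) ^ (n + 1) =
      ((n + 1 : K) / n) ^ (n + 1) * (1 + -1 / ((n : K) + 1) ^ 2) ^ (n + 1) := by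
    rw [← mul_pow]
    congr 1
    field_simp
    ring
  rw [hleft, hright]
  exact mul_lt_mul_of_pos_left hbern (by positivity)

theorem strictMono_add_one_div_self_pow : StrictMono fun n : ℕ ↦ ((n + 1 : K) / n) ^ n := by
  refine strictMono_nat_of_lt_succ fun n ↦ ?_
  rcases n.eq_zero_or_pos with rfl | hn
  · norm_num
  · simpa only [Nat.cast_add, Nat.cast_one] using add_one_div_self_pow_lt_succ (K := K) hn

end

theorem add_one_pow_mul_pow_lt {a c : ℕ} (hac : a < c) :
    (a + 1) ^ a * c ^ c < a ^ a * (c + 1) ^ c := by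
  have h : ((a + 1 : ℚ) / a) ^ a < ((c + 1 : ℚ) / c) ^ c := strictMono_add_one_div_self_pow hac
  have hpos (n : ℕ) : (0 : ℚ) < (n : ℚ) ^ n := by exact_mod_cast Nat.pow_self_pos
  rw [div_pow, div_pow, div_lt_div_iff₀ (hpos a) (hpos c), mul_comm _ ((a : ℚ) ^ a)] at h
  exact_mod_cast h

/-- For naturals a, b with a + 2 ≤ b,
(a!·b!)·((a+1)^{a+1}·(b−1)^{b−1}) < ((a+1)!·(b−1)!)·(a^a·b^b). -/
theorem stmt_1 (a b : ℕ) (hab : a + 2 ≤ b) :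
    (Nat.factorial a * Nat.factorial b) * ((a + 1) ^ (a + 1) * (b - 1) ^ (b - 1)) <
      (Nat.factorial (a + 1) * Nat.factorial (b - 1)) * (a ^ a * b ^ b) := by
  obtain ⟨c, rfl⟩ : ∃ c, b = c + 1 := ⟨b - 1, by omega⟩
  have key := add_one_pow_mul_pow_lt (show a < c by omega)
  simp only [Nat.add_sub_cancel, Nat.factorial_succ, pow_succ]
  calc a.factorial * ((c + 1) * c.factorial) * ((a + 1) ^ a * (a + 1) * c ^ c)
      = (a.factorial * c.factorial * (a + 1) * (c + 1)) * ((a + 1) ^ a * c ^ c) := by ring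
    _ < (a.factorial * c.factorial * (a + 1) * (c + 1)) * (a ^ a * (c + 1) ^ c) :=
        Nat.mul_lt_mul_of_pos_left key (by positivity)
    _ = (a + 1) * a.factorial * c.factorial * (a ^ a * ((c + 1) ^ c * (c + 1))) := by ring
end

section
/- Let n ≥ 2 and d ≥ 1 be integers, and set l = n·⌈d/n⌉ − d. Then for every j : Fin n → ℕ with Σ_k j(k) = d, the real number ∏_k ( j(k)^{j(k)} / j(k)! ) is at least ( ⌊d/n⌋^{⌊d/n⌋} / ⌊d/n⌋! )^{l} · ( ⌈d/n⌉^{⌈d/n⌉} / ⌈d/n⌉! )^{n−l} (with the convention 0^0 = 1). Equivalently, among all standard basis symmetric tensors S(j_1,…,j_n) with j_1+⋯+j_n = d, the balanced choice with l coordinates equal to ⌊d/n⌋ and n−l coordinates equal to ⌈d/n⌉ has the smallest spectral norm sqrt( d!·∏ j_k^{j_k} / (d^d·∏ j_k!) ). -/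
noncomputable def Ff (m : ℕ) : ℝ := (m : ℝ) ^ m / (Nat.factorial m : ℝ)
noncomputable def Gg (m : ℕ) : ℝ := ((m : ℝ) + 1) ^ m / (m : ℝ) ^ m

lemma pow_self_pos (m : ℕ) : (0:ℝ) < (m:ℝ) ^ m := by
  rcases Nat.eq_zero_or_pos m with h | h
  · simp [h]
  · have : (0:ℝ) < (m:ℝ) := by exact_mod_cast h
    positivity

lemma Ff_pos (m : ℕ) : 0 < Ff m := by
  unfold Ff
  exact div_pos (pow_self_pos m) (by exact_mod_cast m.factorial_pos)

lemma Gg_pos (m : ℕ) : 0 < Gg m := by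
  unfold Gg
  exact div_pos (by positivity) (pow_self_pos m)

lemma Ff_succ (m : ℕ) : Ff (m + 1) = Ff m * Gg m := by
  unfold Ff Gg
  rw [Nat.factorial_succ]
  have h1 : ((m:ℝ)) ^ m ≠ 0 := (pow_self_pos m).ne'
  have h2 : (Nat.factorial m : ℝ) ≠ 0 := by exact_mod_cast m.factorial_ne_zero
  have h3 : ((m:ℝ) + 1) ≠ 0 := by positivity
  push_cast
  field_simp
  ring

lemma Gg_mono_succ (m : ℕ) : Gg m ≤ Gg (m + 1) := by
  rcases Nat.eq_zero_or_pos m with h | h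
  · subst h; simp [Gg]
  have hm : (0:ℝ) < (m:ℝ) := by exact_mod_cast h
  -- Bernoulli: (1 - 1/(m+1)^2)^(m+1) ≥ 1 - 1/(m+1)
  have h0 : (1:ℝ) / ((m:ℝ) + 1) ^ 2 ≤ 1 := by
    rw [div_le_one (by positivity)]; nlinarith
  have hb := one_add_mul_le_pow (a := -(1 / ((m:ℝ) + 1) ^ 2)) (by linarith) (m + 1)
  have h1 : (1 : ℝ) + (-(1 / ((m:ℝ) + 1) ^ 2)) = (m:ℝ) * ((m:ℝ) + 2) / ((m:ℝ) + 1) ^ 2 := by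
    field_simp; ring
  have h2 : (1 : ℝ) + ((m:ℕ) + 1 : ℕ) * (-(1 / ((m:ℝ) + 1) ^ 2)) = (m:ℝ) / ((m:ℝ) + 1) := by
    push_cast; field_simp; ring
  rw [h1, h2] at hb
  -- so (m(m+2))^(m+1) / (m+1)^(2(m+1)) ≥ m/(m+1)
  have key : ((m:ℝ) + 1) ^ (2 * m + 1) ≤ (m:ℝ) ^ m * ((m:ℝ) + 2) ^ (m + 1) := by
    have hp : (0:ℝ) < ((m:ℝ) + 1) ^ 2 := by positivity
    rw [div_pow, div_le_div_iff₀ (by positivity) (by positivity)] at hb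
    have hexp : (((m:ℝ) + 1) ^ 2) ^ (m + 1) = ((m:ℝ) + 1) ^ (2 * m + 1) * ((m:ℝ) + 1) := by
      rw [← pow_mul, ← pow_succ]; ring_nf
    rw [mul_pow, hexp, pow_succ] at hb
    have hb' : (m:ℝ) * ((m:ℝ) + 1) * ((m:ℝ) + 1) ^ (2 * m + 1) ≤
        (m:ℝ) * ((m:ℝ) + 1) * ((m:ℝ) ^ m * ((m:ℝ) + 2) ^ (m + 1)) := by
      linear_combination hb
    exact le_of_mul_le_mul_left hb' (by positivity)
  unfold Gg
  rw [div_le_div_iff₀ (pow_self_pos m) (pow_self_pos (m+1))]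
  push_cast
  calc ((m:ℝ) + 1) ^ m * ((m:ℝ) + 1) ^ (m + 1) = ((m:ℝ) + 1) ^ (2 * m + 1) := by
        rw [← pow_add]; ring_nf
    _ ≤ (m:ℝ) ^ m * ((m:ℝ) + 2) ^ (m + 1) := key
    _ = ((m:ℝ) + 1 + 1) ^ (m + 1) * (m:ℝ) ^ m := by ring

lemma Gg_mono : Monotone Gg := monotone_nat_of_le_succ Gg_mono_succ

/-- Tangent line at q: Ff q * Gg q ^ m ≤ Ff m * Gg q ^ q. -/
lemma tangent (q m : ℕ) : Ff q * Gg q ^ m ≤ Ff m * Gg q ^ q := by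
  rcases le_total q m with h | h
  · induction m, h using Nat.le_induction with
    | base => exact le_refl _
    | succ m hm ih =>
      rw [pow_succ, ← mul_assoc, Ff_succ]
      calc Ff q * Gg q ^ m * Gg q ≤ Ff m * Gg q ^ q * Gg q :=
            mul_le_mul_of_nonneg_right ih (Gg_pos q).le
        _ = Ff m * Gg q * Gg q ^ q := by ring
        _ ≤ Ff m * Gg m * Gg q ^ q :=
            mul_le_mul_of_nonneg_right (mul_le_mul_of_nonneg_left (Gg_mono hm) (Ff_pos m).le) ((pow_pos (Gg_pos q) q).le)
  · -- m ≤ q : downward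
    have main : ∀ k, k ≤ q → Ff q * Gg q ^ (q - k) ≤ Ff (q - k) * Gg q ^ q := by
      intro k
      induction k with
      | zero => intro _; simp
      | succ k ih =>
        intro hk
        have hk' : k ≤ q := le_of_lt hk
        have ihh := ih hk'
        have hstep : q - k = (q - (k + 1)) + 1 := by omega
        rw [hstep, Ff_succ] at ihh
        have hle : Gg (q - (k+1)) ≤ Gg q := Gg_mono (by omega)
        have h1 : Ff q * Gg q ^ (q - (k+1)) * Gg q ≤ Ff (q - (k+1)) * Gg q ^ q * Gg q := by
          calc Ff q * Gg q ^ (q - (k+1)) * Gg q = Ff q * Gg q ^ (q - (k+1) + 1) := by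
                rw [pow_succ]; ring
            _ ≤ Ff (q - (k+1)) * Gg (q - (k+1)) * Gg q ^ q := ihh
            _ ≤ Ff (q - (k+1)) * Gg q * Gg q ^ q := by
                exact mul_le_mul_of_nonneg_right (mul_le_mul_of_nonneg_left hle (Ff_pos _).le) ((pow_pos (Gg_pos q) q).le)
            _ = Ff (q - (k+1)) * Gg q ^ q * Gg q := by ring
        exact le_of_mul_le_mul_right h1 (Gg_pos q)
    have := main (q - m) (by omega)
    rwa [Nat.sub_sub_self h] at this

/-- Among exponent vectors j with ∑ j = d, the balanced choice
(l coordinates equal to ⌊d/n⌋ and n−l equal to ⌈d/n⌉, where l = n⌈d/n⌉ − d)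
minimizes ∏_k j_k^{j_k}/j_k!. -/
theorem stmt_2 (n d : ℕ) (hn : 2 ≤ n) (hd : 1 ≤ d)
    (j : Fin n → ℕ) (hj : ∑ k, j k = d) :
    ((((d / n : ℕ) : ℝ) ^ (d / n)) / (Nat.factorial (d / n) : ℝ)) ^ (n * ((d + n - 1) / n) - d) *
      (((((d + n - 1) / n : ℕ) : ℝ) ^ ((d + n - 1) / n)) /
          (Nat.factorial ((d + n - 1) / n) : ℝ)) ^ (n - (n * ((d + n - 1) / n) - d)) ≤
    ∏ k, ((j k : ℝ) ^ (j k) / (Nat.factorial (j k) : ℝ)) := by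
  set q := d / n with hq
  set c := (d + n - 1) / n with hc
  show Ff q ^ (n * c - d) * Ff c ^ (n - (n * c - d)) ≤ ∏ k, Ff (j k)
  have hn0 : 0 < n := by omega
  have hdm : d % n + n * q = d := by rw [hq]; exact Nat.mod_add_div d n
  have hmod : d % n < n := Nat.mod_lt _ hn0
  have hx1 : q * n = n * q := Nat.mul_comm q n
  have hx2 : (q + 1) * n = q * n + n := Nat.succ_mul q n
  have hx3 : (q + 1 + 1) * n = q * n + n + n := by rw [Nat.succ_mul, Nat.succ_mul]
  -- the product inequality from the tangent lemma
  have hprod : Ff q ^ n * Gg q ^ d ≤ (∏ k, Ff (j k)) * Gg q ^ (n * q) := by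
    have h := Finset.prod_le_prod (s := (Finset.univ : Finset (Fin n)))
      (f := fun k => Ff q * Gg q ^ (j k)) (g := fun k => Ff (j k) * Gg q ^ q)
      (fun k _ => mul_nonneg (Ff_pos q).le (pow_nonneg (Gg_pos q).le _))
      (fun k _ => tangent q (j k))
    calc Ff q ^ n * Gg q ^ d = ∏ k : Fin n, (Ff q * Gg q ^ (j k)) := by
          rw [Finset.prod_mul_distrib, Finset.prod_const, Finset.prod_pow_eq_pow_sum, hj]
          simp
      _ ≤ ∏ k : Fin n, (Ff (j k) * Gg q ^ q) := h
      _ = (∏ k, Ff (j k)) * Gg q ^ (n * q) := by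
          rw [Finset.prod_mul_distrib, Finset.prod_const, ← pow_mul]
          simp [mul_comm]
  have hEq : Ff q ^ (n * c - d) * Ff c ^ (n - (n * c - d)) * Gg q ^ (n * q) =
      Ff q ^ n * Gg q ^ d := by
    by_cases hdvd : d % n = 0
    · have hnq : n * q = d := by omega
      have hcq : c = q := by
        rw [hc]
        exact Nat.div_eq_of_lt_le (by omega) (by omega)
      have h0 : n * c - d = 0 := by rw [hcq]; omega
      rw [h0, hcq, hnq]
      simp
    · have hc1 : c = q + 1 := by
        rw [hc]
        exact Nat.div_eq_of_lt_le (by omega) (by omega)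
      have hnc : n * c = n * q + n := by rw [hc1, Nat.mul_succ]
      have hl1 : n * c - d = n - d % n := by omega
      have hl2 : n - (n * c - d) = d % n := by omega
      rw [hl2, hl1, hc1, Ff_succ, mul_pow]
      have e1 : n - d % n + d % n = n := by omega
      calc Ff q ^ (n - d % n) * (Ff q ^ (d % n) * Gg q ^ (d % n)) * Gg q ^ (n * q)
          = (Ff q ^ (n - d % n) * Ff q ^ (d % n)) * (Gg q ^ (d % n) * Gg q ^ (n * q)) := by ring
        _ = Ff q ^ n * Gg q ^ d := by rw [← pow_add, ← pow_add, e1, hdm]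
  have hfin : Ff q ^ (n * c - d) * Ff c ^ (n - (n * c - d)) * Gg q ^ (n * q) ≤
      (∏ k, Ff (j k)) * Gg q ^ (n * q) := by rw [hEq]; exact hprod
  exact le_of_mul_le_mul_right hfin (pow_pos (Gg_pos q) _)
end

section
/- Let n ≥ 1 and d ≥ 2 be integers, let S : (Fin d → Fin n) → ℂ be symmetric with associated polynomial function f and contraction F as in the context, and set M = sSup{ |f(x)| : x ∈ ℂⁿ, ‖x‖ = 1 } (the spectral norm of S, by Banach's theorem). Then: (a) there exists x ∈ ℂⁿ with ‖x‖ = 1 such that F_l(x) = M · conj(x_l) for every l ∈ Fin n; (b) for every x ∈ ℂⁿ with ‖x‖ = 1 and every λ ∈ ℝ such that F_l(x) = λ · conj(x_l) for all l, one has |λ| ≤ M. -/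
/-!
The maximum `M` of `‖f‖` on the unit sphere is attained by compactness, and since `f` is
homogeneous of degree `d`, multiplying a maximiser by a unit phase gives `x₀` with `f x₀ = M`.
Homogeneity also gives `‖f y‖ ≤ M ‖y‖ ^ d` everywhere, so `t ↦ M ‖x₀ + t v‖ ^ d - Re f (x₀ + t v)`
has a minimum at `t = 0`. By the symmetry of `S` the derivative of `f` along `v` is
`d ∑ v_l F_l(x₀)`, and the resulting first-order conditions for all `v` say `F(x₀) = M conj x₀`.
Conversely `∑ x_l F_l(x) = f(x)`, so an anti-eigenpair `(x, λ)` has `f(x) = λ`, whence `|λ| ≤ M`.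
-/

open Finset

theorem Complex.exists_norm_eq_one_pow_mul_eq_norm (z : ℂ) {d : ℕ} (hd : d ≠ 0) :
    ∃ u : ℂ, ‖u‖ = 1 ∧ u ^ d * z = ‖z‖ := by
  refine ⟨Complex.exp (↑(-(z.arg / d)) * Complex.I), Complex.norm_exp_ofReal_mul_I _, ?_⟩
  have hz : z = ‖z‖ * Complex.exp (z.arg * Complex.I) := (Complex.norm_mul_exp_arg_mul_I z).symm
  calc Complex.exp (↑(-(z.arg / d)) * Complex.I) ^ d * z
      = ‖z‖ * Complex.exp (d * (↑(-(z.arg / d)) * Complex.I) + z.arg * Complex.I) := by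
        nth_rewrite 2 [hz]
        rw [← Complex.exp_nat_mul, Complex.exp_add]
        ring
    _ = ‖z‖ := by
        have hd' : (d : ℂ) ≠ 0 := Nat.cast_ne_zero.2 hd
        push_cast
        field_simp
        simp

section Homogeneous

variable {E : Type*} [NormedAddCommGroup E] [NormedSpace ℂ E]

theorem norm_le_mul_norm_pow_of_homogeneous {g : E → ℂ} {d : ℕ} (hd : d ≠ 0)
    (hg : ∀ (c : ℂ) y, g (c • y) = c ^ d * g y) {M : ℝ} (hM : ∀ y, ‖y‖ = 1 → ‖g y‖ ≤ M)
    (y : E) : ‖g y‖ ≤ M * ‖y‖ ^ d := by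
  rcases eq_or_ne y 0 with rfl | hy
  · have : g 0 = 0 := by simpa [zero_pow hd] using hg 0 0
    simp [this, zero_pow hd]
  · have hunit : ‖(‖y‖⁻¹ : ℂ) • y‖ = 1 := by
      rw [norm_smul, norm_inv, Complex.norm_real, norm_norm,
        inv_mul_cancel₀ (norm_ne_zero_iff.2 hy)]
    have hy' : y = (‖y‖ : ℂ) • (‖y‖⁻¹ : ℂ) • y := by
      rw [smul_smul, mul_inv_cancel₀ (by simpa using hy), one_smul]
    rw [hy', hg, norm_mul, norm_pow, Complex.norm_real, norm_norm, ← hy', mul_comm]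
    exact mul_le_mul_of_nonneg_right (hM _ hunit) (by positivity)

section Sphere

variable [ProperSpace E] {g : E → ℂ} {d : ℕ}

theorem norm_le_sSup_sphere_mul_norm_pow (hgc : Continuous g) (hd : d ≠ 0)
    (hg : ∀ (c : ℂ) y, g (c • y) = c ^ d * g y) (y : E) :
    ‖g y‖ ≤ sSup ((fun y => ‖g y‖) '' Metric.sphere 0 1) * ‖y‖ ^ d :=
  norm_le_mul_norm_pow_of_homogeneous hd hg (fun z hz =>
    le_csSup ((isCompact_sphere 0 1).image (by fun_prop)).bddAbove ⟨z, by simpa using hz, rfl⟩) y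

theorem exists_norm_eq_one_apply_eq_sSup_sphere [Nontrivial E] (hgc : Continuous g) (hd : d ≠ 0)
    (hg : ∀ (c : ℂ) y, g (c • y) = c ^ d * g y) :
    ∃ x, ‖x‖ = 1 ∧ g x = sSup ((fun y => ‖g y‖) '' Metric.sphere 0 1) := by
  obtain ⟨x, hx, hmax⟩ := ((isCompact_sphere 0 1).image (by fun_prop)).sSup_mem
    ((NormedSpace.sphere_nonempty.2 zero_le_one).image (fun y : E => ‖g y‖))
  obtain ⟨u, hu, hux⟩ := Complex.exists_norm_eq_one_pow_mul_eq_norm (g x) hd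
  refine ⟨u • x, by simpa [norm_smul, hu] using hx, ?_⟩
  rw [hg, hux, ← hmax]

end Sphere

end Homogeneous

section FirstOrderCondition

variable {E : Type*} [NormedAddCommGroup E] [InnerProductSpace ℂ E]

theorem hasDerivAt_norm_add_smul {x : E} (hx : x ≠ 0) (v : E) :
    HasDerivAt (fun t : ℝ => ‖x + (t : ℂ) • v‖) ((inner ℂ x v).re / ‖x‖) 0 := by
  have hsq : ∀ t : ℝ,
      ‖x + (t : ℂ) • v‖ ^ 2 = ‖x‖ ^ 2 + 2 * (inner ℂ x v).re * t + ‖v‖ ^ 2 * t ^ 2 := by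
    intro t
    rw [@norm_add_sq ℂ, inner_smul_right, norm_smul, Complex.norm_real, Real.norm_eq_abs,
      mul_pow, sq_abs, RCLike.re_to_complex, Complex.re_ofReal_mul]
    ring
  have hQ : HasDerivAt (fun t : ℝ => ‖x‖ ^ 2 + 2 * (inner ℂ x v).re * t + ‖v‖ ^ 2 * t ^ 2)
      (2 * (inner ℂ x v).re) 0 := by
    have := (((hasDerivAt_id' (0 : ℝ)).const_mul (2 * (inner ℂ x v).re)).const_add
      (‖x‖ ^ 2)).fun_add ((hasDerivAt_pow 2 (0 : ℝ)).const_mul (‖v‖ ^ 2))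
    simpa using this
  have h := hQ.sqrt (by simpa using hx)
  simp only [mul_zero, add_zero, ne_eq, OfNat.ofNat_ne_zero, not_false_eq_true, zero_pow,
    Real.sqrt_sq (norm_nonneg x)] at h
  convert h using 1
  · funext t
    rw [← hsq, Real.sqrt_sq (norm_nonneg _)]
  · field_simp

theorem re_eq_of_hasDerivAt_of_norm_le_mul_pow {g : E → ℂ} {M : ℝ} {d : ℕ}
    (hg : ∀ y, ‖g y‖ ≤ M * ‖y‖ ^ d) {x : E} (hx : ‖x‖ = 1) (hgx : g x = M) (v : E) {g' : ℂ}
    (hg' : HasDerivAt (fun t : ℝ => g (x + (t : ℂ) • v)) g' 0) :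
    g'.re = d * M * (inner ℂ x v).re := by
  have hx0 : x ≠ 0 := norm_ne_zero_iff.1 (by simp [hx])
  have hgap : IsLocalMin (fun t : ℝ => M * ‖x + (t : ℂ) • v‖ ^ d - (g (x + (t : ℂ) • v)).re) 0 :=
    Filter.Eventually.of_forall fun t => by
      simp only [Complex.ofReal_zero, zero_smul, add_zero, hx, one_pow, mul_one, hgx,
        Complex.ofReal_re, sub_self, sub_nonneg]
      exact (Complex.re_le_norm _).trans (hg _)
  have hre : HasDerivAt (fun t : ℝ => (g (x + (t : ℂ) • v)).re) g'.re 0 :=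
    Complex.reCLM.hasFDerivAt.comp_hasDerivAt 0 hg'
  have hderiv := (((hasDerivAt_norm_add_smul hx0 v).pow d).const_mul M).sub hre
  have hcrit := hgap.hasDerivAt_eq_zero hderiv
  simp only [Complex.ofReal_zero, zero_smul, add_zero, hx, one_pow, div_one, mul_one] at hcrit
  linear_combination -hcrit

end FirstOrderCondition

theorem eq_of_forall_re_sum_mul_eq {ι : Type*} [Fintype ι] [DecidableEq ι] {w w' : ι → ℂ}
    (h : ∀ v : ι → ℂ, (∑ l, v l * w l).re = (∑ l, v l * w' l).re) : w = w' := by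
  funext l
  have h1 := h (Pi.single l 1)
  have h2 := h (Pi.single l Complex.I)
  simp only [Pi.single_apply, ite_mul, zero_mul, Finset.sum_ite_eq', Finset.mem_univ, if_true,
    one_mul] at h1 h2
  apply Complex.ext h1
  simpa using h2

section SymmetricTensor

variable {n m d : ℕ}

def tensorPoly (S : (Fin d → Fin n) → ℂ) (x : Fin n → ℂ) : ℂ :=
  ∑ i : Fin d → Fin n, S i * ∏ k, x (i k)

def tensorContract (S : (Fin (m + 1) → Fin n) → ℂ) (l : Fin n) (x : Fin n → ℂ) : ℂ :=
  ∑ i : Fin m → Fin n, S (Fin.cons l i) * ∏ k, x (i k)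

theorem sum_pi_fin_succ_eq_sum_cons {M : Type*} [AddCommMonoid M] (g : (Fin (m + 1) → Fin n) → M) :
    ∑ i, g i = ∑ l, ∑ i : Fin m → Fin n, g (Fin.cons l i) := by
  rw [← (Fin.consEquiv fun _ => Fin n).sum_comp, Fintype.sum_prod_type]
  rfl

theorem Fin.prod_erase_zero {M : Type*} [CommMonoid M] (h : Fin (m + 1) → M) :
    ∏ k ∈ univ.erase 0, h k = ∏ k : Fin m, h k.succ := by
  rw [Fin.univ_succ, Finset.erase_cons, Finset.prod_map]
  rfl

theorem sum_tensorContract_mul (S : (Fin (m + 1) → Fin n) → ℂ) (x v : Fin n → ℂ) :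
    ∑ l, v l * tensorContract S l x =
      ∑ i : Fin (m + 1) → Fin n, S i * ((∏ k ∈ univ.erase 0, x (i k)) * v (i 0)) := by
  rw [sum_pi_fin_succ_eq_sum_cons]
  refine sum_congr rfl fun l _ => ?_
  rw [tensorContract, mul_sum]
  refine sum_congr rfl fun i _ => ?_
  rw [Fin.prod_erase_zero]
  simp only [Fin.cons_succ, Fin.cons_zero]
  ring

theorem sum_mul_tensorContract (S : (Fin (m + 1) → Fin n) → ℂ) (x : Fin n → ℂ) :
    ∑ l, x l * tensorContract S l x = tensorPoly S x := by
  rw [sum_tensorContract_mul, tensorPoly]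
  refine sum_congr rfl fun i _ => ?_
  rw [← prod_erase_mul _ _ (mem_univ 0)]

theorem tensorPoly_smul (S : (Fin d → Fin n) → ℂ) (c : ℂ) (x : Fin n → ℂ) :
    tensorPoly S (c • x) = c ^ d * tensorPoly S x := by
  simp only [tensorPoly, mul_sum, Pi.smul_apply, smul_eq_mul, prod_mul_distrib, prod_const,
    card_univ, Fintype.card_fin]
  exact sum_congr rfl fun i _ => by ring

@[fun_prop]
theorem continuous_tensorPoly (S : (Fin d → Fin n) → ℂ) : Continuous (tensorPoly S) := by
  unfold tensorPoly
  fun_prop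

theorem sum_mul_prod_erase_swap (S : (Fin d → Fin n) → ℂ)
    (hS : ∀ (σ : Equiv.Perm (Fin d)) (i : Fin d → Fin n), S (i ∘ σ) = S i)
    (x v : Fin n → ℂ) (j j' : Fin d) :
    ∑ i : Fin d → Fin n, S i * ((∏ k ∈ univ.erase j, x (i k)) * v (i j)) =
      ∑ i : Fin d → Fin n, S i * ((∏ k ∈ univ.erase j', x (i k)) * v (i j')) := by
  set σ := Equiv.swap j j'
  have hσ : Function.Involutive (fun i : Fin d → Fin n => i ∘ σ) := fun i => by
    ext k
    simp [σ]
  refine Fintype.sum_bijective _ hσ.bijective _ _ fun i => ?_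
  simp only [hS, Function.comp_apply, σ, Equiv.swap_apply_right]
  congr 2
  have hmap : (univ.erase j').map (Equiv.swap j j').toEmbedding = univ.erase j := by
    rw [Finset.map_erase, Finset.map_univ_equiv, Equiv.coe_toEmbedding, Equiv.swap_apply_right]
  rw [← hmap, Finset.prod_map]
  rfl

theorem hasDerivAt_tensorPoly_line (S : (Fin (m + 1) → Fin n) → ℂ)
    (hS : ∀ (σ : Equiv.Perm (Fin (m + 1))) (i : Fin (m + 1) → Fin n), S (i ∘ σ) = S i)
    (x v : Fin n → ℂ) :
    HasDerivAt (fun t : ℂ => tensorPoly S (x + t • v))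
      ((m + 1) * ∑ l, v l * tensorContract S l x) 0 := by
  have hprod : ∀ i : Fin (m + 1) → Fin n,
      HasDerivAt (fun t : ℂ => ∏ k, (x + t • v) (i k))
        (∑ j, (∏ k ∈ univ.erase j, x (i k)) * v (i j)) 0 := by
    intro i
    have := HasDerivAt.fun_finsetProd (u := univ) (x := (0 : ℂ))
      (fun k _ => ((hasDerivAt_id' (0 : ℂ)).mul_const (v (i k))).const_add (x (i k)))
    simpa using this
  have := HasDerivAt.fun_sum (u := univ) fun i _ => (hprod i).const_mul (S i)
  refine this.congr_deriv ?_
  have hj : ∀ j, ∑ i, S i * ((∏ k ∈ univ.erase j, x (i k)) * v (i j)) =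
      ∑ l, v l * tensorContract S l x := fun j =>
    (sum_mul_prod_erase_swap S hS x v j 0).trans (sum_tensorContract_mul S x v).symm
  calc _ = ∑ j, ∑ i, S i * ((∏ k ∈ univ.erase j, x (i k)) * v (i j)) := by
        simp only [mul_sum]
        exact sum_comm
    _ = _ := by simp [hj]

theorem tensorPoly_eq_of_tensorContract_eq (S : (Fin (m + 1) → Fin n) → ℂ) {x : Fin n → ℂ}
    {lam : ℂ} (h : ∀ l, tensorContract S l x = lam * starRingEnd ℂ (x l)) :
    tensorPoly S x = lam * ∑ l, ‖x l‖ ^ 2 := by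
  rw [← sum_mul_tensorContract]
  push_cast
  rw [mul_sum]
  refine sum_congr rfl fun l _ => ?_
  rw [h, ← Complex.mul_conj']
  ring

theorem tensorContract_eq_mul_conj_of_norm_le (S : (Fin (m + 1) → Fin n) → ℂ)
    (hS : ∀ (σ : Equiv.Perm (Fin (m + 1))) (i : Fin (m + 1) → Fin n), S (i ∘ σ) = S i) {M : ℝ}
    (hbound : ∀ y : EuclideanSpace ℂ (Fin n), ‖tensorPoly S y.ofLp‖ ≤ M * ‖y‖ ^ (m + 1))
    {x : EuclideanSpace ℂ (Fin n)} (hx : ‖x‖ = 1) (hMx : tensorPoly S x.ofLp = M) (l : Fin n) :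
    tensorContract S l x.ofLp = M * starRingEnd ℂ (x.ofLp l) := by
  suffices h : (fun l => tensorContract S l x.ofLp) = fun l => M * starRingEnd ℂ (x.ofLp l) from
    congrFun h l
  refine eq_of_forall_re_sum_mul_eq fun v => ?_
  have hline : HasDerivAt (fun t : ℝ => tensorPoly S (x + (t : ℂ) • WithLp.toLp 2 v).ofLp)
      ((m + 1) * ∑ l, v l * tensorContract S l x.ofLp) 0 := by
    have := hasDerivAt_tensorPoly_line S hS x.ofLp v
    rw [← Complex.ofReal_zero] at this
    exact this.comp_ofReal
  have hcrit := re_eq_of_hasDerivAt_of_norm_le_mul_pow hbound hx hMx _ hline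
  have hinner : ∑ l, v l * (M * starRingEnd ℂ (x.ofLp l)) = M * inner ℂ x (WithLp.toLp 2 v) := by
    simp only [PiLp.inner_apply, RCLike.inner_apply, mul_sum]
    exact sum_congr rfl fun l _ => by ring
  have hm : ((m : ℂ) + 1) = ((m + 1 : ℕ) : ℝ) := by push_cast; rfl
  rw [hinner, Complex.re_ofReal_mul]
  rw [hm, Complex.re_ofReal_mul, mul_assoc] at hcrit
  exact mul_left_cancel₀ (by positivity) hcrit

end SymmetricTensor

theorem EuclideanSpace.norm_toLp_eq_one_iff {𝕜 ι : Type*} [RCLike 𝕜] [Fintype ι] (x : ι → 𝕜) :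
    ‖(WithLp.toLp 2 x : EuclideanSpace 𝕜 ι)‖ = 1 ↔ ∑ l, ‖x l‖ ^ 2 = 1 := by
  rw [EuclideanSpace.norm_eq, Real.sqrt_eq_one]

theorem EuclideanSpace.setOf_sum_norm_sq_eq_one_eq_image_sphere {𝕜 ι : Type*} [RCLike 𝕜]
    [Fintype ι] (φ : (ι → 𝕜) → ℝ) :
    {r : ℝ | ∃ x : ι → 𝕜, ∑ l, ‖x l‖ ^ 2 = 1 ∧ r = φ x} =
      (fun y : EuclideanSpace 𝕜 ι => φ y.ofLp) '' Metric.sphere 0 1 := by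
  ext r
  constructor
  · rintro ⟨x, hx, rfl⟩
    exact ⟨WithLp.toLp 2 x, by simpa [EuclideanSpace.norm_toLp_eq_one_iff] using hx, rfl⟩
  · rintro ⟨y, hy, rfl⟩
    exact ⟨y.ofLp, by simpa [← EuclideanSpace.norm_toLp_eq_one_iff] using hy, rfl⟩

/-- With M the spectral norm of the symmetric tensor S (Banach's theorem),
(a) there is a unit anti-eigenvector with anti-eigenvalue M, and (b) every
anti-eigenvalue λ satisfies |λ| ≤ M. -/
theorem stmt_5 (n d : ℕ) (hn : 1 ≤ n) (hd : 2 ≤ d)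
    (S : (Fin d → Fin n) → ℂ)
    (hS : ∀ (σ : Equiv.Perm (Fin d)) (i : Fin d → Fin n), S (i ∘ σ) = S i)
    (f : (Fin n → ℂ) → ℂ)
    (hf : ∀ x, f x = ∑ i : Fin d → Fin n, S i * ∏ k, x (i k))
    (F : Fin n → (Fin n → ℂ) → ℂ)
    (hF : ∀ l x, F l x = ∑ i : Fin (d - 1) → Fin n,
        S (fun k => (Fin.cons l i : Fin (d - 1 + 1) → Fin n)
              (Fin.cast (by omega : d - 1 + 1 = d).symm k)) *
          ∏ k, x (i k))
    (M : ℝ)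
    (hM : M = sSup {r : ℝ | ∃ x : Fin n → ℂ,
        (∑ l, ‖x l‖ ^ 2) = 1 ∧ r = ‖f x‖}) :
    (∃ x : Fin n → ℂ, (∑ l, ‖x l‖ ^ 2) = 1 ∧
        ∀ l, F l x = (M : ℂ) * (starRingEnd ℂ) (x l)) ∧
    (∀ x : Fin n → ℂ, (∑ l, ‖x l‖ ^ 2) = 1 →
      ∀ lam : ℝ, (∀ l, F l x = (lam : ℂ) * (starRingEnd ℂ) (x l)) → |lam| ≤ M) := by
  obtain ⟨m, rfl⟩ : ∃ m, d = m + 1 := ⟨d - 1, by omega⟩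
  obtain rfl : f = tensorPoly S := funext hf
  -- `Fin.cast` in `hF` reduces to the identity once `d = m + 1`.
  obtain rfl : F = tensorContract S := funext₂ hF
  have : NeZero n := ⟨by omega⟩
  set g : EuclideanSpace ℂ (Fin n) → ℂ := fun y => tensorPoly S y.ofLp
  have hg : ∀ (c : ℂ) y, g (c • y) = c ^ (m + 1) * g y := fun c y => tensorPoly_smul S c y.ofLp
  have hgc : Continuous g := by fun_prop
  rw [EuclideanSpace.setOf_sum_norm_sq_eq_one_eq_image_sphere] at hM
  have hbound : ∀ y, ‖g y‖ ≤ M * ‖y‖ ^ (m + 1) :=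
    hM ▸ norm_le_sSup_sphere_mul_norm_pow hgc m.add_one_ne_zero hg
  obtain ⟨x₀, hx₀, hgx₀⟩ := hM ▸ exists_norm_eq_one_apply_eq_sSup_sphere hgc m.add_one_ne_zero hg
  refine ⟨⟨x₀.ofLp, (EuclideanSpace.norm_toLp_eq_one_iff _).1 hx₀,
    tensorContract_eq_mul_conj_of_norm_le S hS hbound hx₀ hgx₀⟩, fun x hx lam hlam => ?_⟩
  have hfx := tensorPoly_eq_of_tensorContract_eq S hlam
  rw [hx, Complex.ofReal_one, mul_one] at hfx
  simpa [g, hfx, (EuclideanSpace.norm_toLp_eq_one_iff x).2 hx] using hbound (WithLp.toLp 2 x)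
end

section
/- Let n ≥ 1 and d ≥ 3 be integers, let S : (Fin d → Fin n) → ℂ be symmetric with contraction F and map H as in the context, and let ‖S‖_σ = sSup{ |Σ_{i : Fin d → Fin n} S(i) ∏_{k} x^{(k)}(i(k))| : x^{(1)},…,x^{(d)} ∈ ℂⁿ with ‖x^{(k)}‖ = 1 for all k } be the spectral norm of S. If y ∈ ℂⁿ satisfies H(y) = y and y ≠ 0, then ‖y‖^{−(d−2)} ≤ ‖S‖_σ, i.e. 1 ≤ ‖S‖_σ · ‖y‖^{d−2}. -/
/-!
If `H y = y`, then with `z = conj (F y)` the fixed-point equation reads `conj y = F z`, and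
`conj z = F y` holds by definition. Pairing `conj v = F w` with `v` gives
`‖v‖² = S(v, w, …, w) ≤ ‖S‖_σ ‖v‖ ‖w‖^(d-1)`, so `‖y‖ ≤ ‖S‖_σ ‖z‖^(d-1)` and
`‖z‖ ≤ ‖S‖_σ ‖y‖^(d-1)`. Substituting one bound into the other yields
`‖y‖ ≤ ‖y‖ (‖S‖_σ ‖y‖^(d-2))^d`, whence `1 ≤ ‖S‖_σ ‖y‖^(d-2)`.
-/

open Finset ComplexConjugate

local notation "‖" v "‖₂" => ‖WithLp.toLp 2 v‖

theorem prod_cons_cast {V M : Type*} [CommMonoid M] {m d : ℕ} (h : m + 1 = d) (g : V → M)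
    (v w : V) :
    ∏ k : Fin d, g ((Fin.cons v fun _ => w : Fin (m + 1) → V) (Fin.cast h.symm k)) =
      g v * g w ^ m := by
  subst h
  simp [Fin.prod_univ_succ]

section Tensor

variable {ι κ : Type*} [Fintype ι] [DecidableEq ι] [Fintype κ]

def tensorApply (S : (ι → κ) → ℂ) (x : ι → κ → ℂ) : ℂ :=
  ∑ i : ι → κ, S i * ∏ k, x k (i k)

noncomputable def tensorSpectralNorm (S : (ι → κ) → ℂ) : ℝ :=
  sSup {r : ℝ | ∃ x : ι → κ → ℂ, (∀ k, (∑ l, ‖x k l‖ ^ 2) = 1) ∧ r = ‖tensorApply S x‖}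

variable (S : (ι → κ) → ℂ)

theorem tensorApply_smul (c : ι → ℂ) (x : ι → κ → ℂ) :
    tensorApply S (fun k => c k • x k) = (∏ k, c k) * tensorApply S x := by
  simp only [tensorApply, Pi.smul_apply, smul_eq_mul, prod_mul_distrib, mul_sum]
  exact sum_congr rfl fun _ _ => by ring

theorem tensorApply_eq_zero {x : ι → κ → ℂ} {k : ι} (hk : x k = 0) : tensorApply S x = 0 :=
  sum_eq_zero fun i _ => by rw [prod_eq_zero (mem_univ k) (by simp [hk]), mul_zero]

theorem norm_tensorApply_le_sum_norm {x : ι → κ → ℂ} (hx : ∀ k, (∑ l, ‖x k l‖ ^ 2) = 1) :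
    ‖tensorApply S x‖ ≤ ∑ i, ‖S i‖ := by
  refine (norm_sum_le _ _).trans (sum_le_sum fun i _ => ?_)
  have hle : ∀ k, ‖x k (i k)‖ ≤ 1 := fun k =>
    (sq_le_one_iff₀ (norm_nonneg _)).mp <|
      hx k ▸ single_le_sum (f := fun l => ‖x k l‖ ^ 2) (fun _ _ => by positivity) (mem_univ _)
  rw [norm_mul, norm_prod]
  exact mul_le_of_le_one_right (norm_nonneg _)
    (prod_le_one (fun _ _ => norm_nonneg _) fun k _ => hle k)

theorem tensorSpectralNorm_nonneg : 0 ≤ tensorSpectralNorm S :=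
  Real.sSup_nonneg fun _ ⟨_, _, hr⟩ => hr ▸ norm_nonneg _

theorem norm_tensorApply_le_tensorSpectralNorm {x : ι → κ → ℂ}
    (hx : ∀ k, (∑ l, ‖x k l‖ ^ 2) = 1) : ‖tensorApply S x‖ ≤ tensorSpectralNorm S :=
  le_csSup ⟨_, fun _ ⟨_, hy, hr⟩ => hr ▸ norm_tensorApply_le_sum_norm S hy⟩ ⟨x, hx, rfl⟩

theorem sum_sq_norm_eq_one {v : κ → ℂ} (hv : ‖v‖₂ = 1) : ∑ l, ‖v l‖ ^ 2 = 1 := by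
  simpa [hv] using (EuclideanSpace.norm_sq_eq (WithLp.toLp 2 v)).symm

theorem norm_tensorApply_le (x : ι → κ → ℂ) :
    ‖tensorApply S x‖ ≤ tensorSpectralNorm S * ∏ k, ‖x k‖₂ := by
  by_cases hx : ∃ k, x k = 0
  · obtain ⟨k, hk⟩ := hx
    rw [tensorApply_eq_zero S hk, norm_zero]
    exact mul_nonneg (tensorSpectralNorm_nonneg S) (prod_nonneg fun _ _ => norm_nonneg _)
  have hx0 : ∀ k, x k ≠ 0 := fun k hk => hx ⟨k, hk⟩
  have hpos : ∀ k, ‖x k‖₂ ≠ 0 := fun k => by simpa using hx0 k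
  set u : ι → κ → ℂ := fun k => ((‖x k‖₂⁻¹ : ℝ) : ℂ) • x k
  have hu : ∀ k, ∑ l, ‖u k l‖ ^ 2 = 1 := fun k =>
    sum_sq_norm_eq_one <| by simpa [u] using norm_smul_inv_norm (𝕜 := ℂ) (by simpa using hx0 k)
  have hxu : x = fun k => ((‖x k‖₂ : ℝ) : ℂ) • u k := by
    funext k
    simp [u, smul_smul, hpos k]
  calc ‖tensorApply S x‖ = (∏ k, ‖x k‖₂) * ‖tensorApply S u‖ := by
        conv_lhs => rw [hxu, tensorApply_smul, norm_mul, norm_prod]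
        simp
    _ ≤ (∏ k, ‖x k‖₂) * tensorSpectralNorm S := by
        gcongr
        exact norm_tensorApply_le_tensorSpectralNorm S hu
    _ = _ := mul_comm _ _

theorem tensorApply_cons {m : ℕ} (S : (Fin (m + 1) → κ) → ℂ) (v : κ → ℂ) (x : Fin m → κ → ℂ) :
    tensorApply S (Fin.cons v x) = ∑ l, v l * tensorApply (fun i => S (Fin.cons l i)) x := by
  simp only [tensorApply, ← (Fin.consEquiv fun _ => κ).sum_comp, Fintype.sum_prod_type, mul_sum]
  refine sum_congr rfl fun l _ => sum_congr rfl fun i _ => ?_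
  simp [Fin.consEquiv, Fin.prod_univ_succ]
  ring

theorem tensorApply_cons_cast {m d : ℕ} (h : m + 1 = d) (S : (Fin d → κ) → ℂ) (v w : κ → ℂ) :
    tensorApply S (fun k => (Fin.cons v fun _ => w : Fin (m + 1) → κ → ℂ) (Fin.cast h.symm k)) =
      ∑ l, v l * ∑ i : Fin m → κ,
        S (fun k => (Fin.cons l i : Fin (m + 1) → κ) (Fin.cast h.symm k)) * ∏ k, w (i k) := by
  subst h
  simp only [Fin.cast_eq_self]
  exact tensorApply_cons S v fun _ => w

theorem norm_le_tensorSpectralNorm_mul_pow {m d : ℕ} (h : m + 1 = d) (S : (Fin d → κ) → ℂ)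
    {v w : κ → ℂ} (hvw : ∀ l, conj (v l) = ∑ i : Fin m → κ,
      S (fun k => (Fin.cons l i : Fin (m + 1) → κ) (Fin.cast h.symm k)) * ∏ k, w (i k)) :
    ‖v‖₂ ≤ tensorSpectralNorm S * ‖w‖₂ ^ m := by
  set X : Fin d → κ → ℂ :=
    fun k => (Fin.cons v fun _ => w : Fin (m + 1) → κ → ℂ) (Fin.cast h.symm k)
  have hX : ((‖v‖₂ ^ 2 : ℝ) : ℂ) = tensorApply S X := by
    rw [tensorApply_cons_cast h]
    simp_rw [← hvw, Complex.mul_conj, Complex.normSq_eq_norm_sq, EuclideanSpace.norm_sq_eq]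
    push_cast
    rfl
  have hsq : ‖v‖₂ * ‖v‖₂ ≤ ‖v‖₂ * (tensorSpectralNorm S * ‖w‖₂ ^ m) :=
    calc ‖v‖₂ * ‖v‖₂ = ‖tensorApply S X‖ := by
          rw [← hX, Complex.norm_real, Real.norm_of_nonneg (by positivity), sq]
      _ ≤ tensorSpectralNorm S * ∏ k, ‖X k‖₂ := norm_tensorApply_le S X
      _ = ‖v‖₂ * (tensorSpectralNorm S * ‖w‖₂ ^ m) := by
          rw [prod_cons_cast h fun u => ‖u‖₂]
          ring
  rcases (norm_nonneg (WithLp.toLp 2 v)).eq_or_lt with hv | hv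
  · rw [← hv]
    exact mul_nonneg (tensorSpectralNorm_nonneg S) (by positivity)
  · exact le_of_mul_le_mul_left hsq hv

end Tensor

theorem one_le_mul_pow_of_le_mul_pow {M a b : ℝ} {m : ℕ} (hM : 0 ≤ M) (ha : 0 < a) (hb : 0 ≤ b)
    (hab : a ≤ M * b ^ (m + 1)) (hba : b ≤ M * a ^ (m + 1)) : 1 ≤ M * a ^ m := by
  have key : a * 1 ≤ a * (M * a ^ m) ^ (m + 2) :=
    calc a * 1 ≤ M * b ^ (m + 1) := by rw [mul_one]; exact hab
      _ ≤ M * (M * a ^ (m + 1)) ^ (m + 1) := by gcongr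
      _ = a * (M * a ^ m) ^ (m + 2) := by ring
  exact (one_le_pow_iff_of_nonneg (by positivity) (by omega)).mp (le_of_mul_le_mul_left key ha)

/-- If y ≠ 0 is a fixed point of H, then ‖y‖^{−(d−2)} ≤ ‖S‖_σ,
i.e. 1 ≤ ‖S‖_σ · ‖y‖^{d−2}. -/
theorem stmt_7 (n d : ℕ) (hd : 3 ≤ d)
    (S : (Fin d → Fin n) → ℂ)
    (F : Fin n → (Fin n → ℂ) → ℂ)
    (hF : ∀ l y, F l y = ∑ i : Fin (d - 1) → Fin n,
        S (fun k => (Fin.cons l i : Fin (d - 1 + 1) → Fin n)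
              (Fin.cast (by omega : d - 1 + 1 = d).symm k)) *
          ∏ k, y (i k))
    (H : (Fin n → ℂ) → (Fin n → ℂ))
    (hH : ∀ y l, H y l = (starRingEnd ℂ) (F l (fun m => (starRingEnd ℂ) (F m y))))
    (M : ℝ)
    (hM : M = sSup {r : ℝ | ∃ x : Fin d → Fin n → ℂ,
        (∀ k, (∑ l, ‖x k l‖ ^ 2) = 1) ∧
        r = ‖∑ i : Fin d → Fin n, S i * ∏ k, x k (i k)‖})
    (y : Fin n → ℂ) (hy : H y = y) (hy0 : y ≠ 0) :
    1 ≤ M * (Real.sqrt (∑ l, ‖y l‖ ^ 2)) ^ (d - 2) := by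
  set z : Fin n → ℂ := fun m => conj (F m y)
  have hyz : ∀ l, conj (y l) = F l z := fun l => by rw [← congrFun hy l, hH, Complex.conj_conj]
  have hzy : ∀ m, conj (z m) = F m y := fun m => Complex.conj_conj _
  have hdd : d - 1 + 1 = d := by omega
  have hy_le := norm_le_tensorSpectralNorm_mul_pow hdd S fun l => (hyz l).trans (hF l z)
  have hz_le := norm_le_tensorSpectralNorm_mul_pow hdd S fun m => (hzy m).trans (hF m y)
  rw [show d - 1 = d - 2 + 1 by omega] at hy_le hz_le
  rw [show Real.sqrt (∑ l, ‖y l‖ ^ 2) = ‖y‖₂ by simp [EuclideanSpace.norm_eq], hM]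
  exact one_le_mul_pow_of_le_mul_pow (tensorSpectralNorm_nonneg S) (by simpa using hy0)
    (norm_nonneg _) hy_le hz_le
end

section
/- Let d ≥ 3 be an integer and s = (s_0,…,s_d) ∈ ℂ^{d+1}. Define the functions on ℂ: F₀(x₀,x₁) = Σ_{j=0}^{d−1} C(d−1,j) s_j x₀^{d−1−j} x₁^{j}, F₁(x₀,x₁) = Σ_{j=0}^{d−1} C(d−1,j) s_{j+1} x₀^{d−1−j} x₁^{j}, p(z) = Σ_{j=0}^{d−1} C(d−1,j) s_{j+1} z^{j}, q(z) = Σ_{j=0}^{d−1} C(d−1,j) s_j z^{j}. Then for every z ∈ ℂ the following are equivalent: (i) there exists x₀ ∈ ℂ, x₀ ≠ 0, such that F₀(x₀, x₀·z) = conj(x₀) and F₁(x₀, x₀·z) = conj(x₀·z); (ii) conj(z)·q(z) = p(z) and q(z) ≠ 0. -/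
/-!
By homogeneity, `F₀ x₀ (x₀ z) = x₀ ^ (d - 1) q(z)` and `F₁ x₀ (x₀ z) = x₀ ^ (d - 1) p(z)`, so the
system reads `x₀ ^ (d - 1) q(z) = x̄₀`, `x₀ ^ (d - 1) p(z) = x̄₀ z̄`. Given the first equation, the
second is equivalent to `z̄ q(z) = p(z)`. The first has a nonzero solution iff `q(z) ≠ 0`: writing
`x₀ = ρ w` with `ρ > 0`, `|w| = 1`, it amounts to `ρ ^ (d - 2) |q(z)| = 1`, solvable since
`d - 2 ≥ 1`, and `w ^ d = conj (q(z)) / |q(z)|`.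
-/

open ComplexConjugate

lemma exists_pow_mul_eq_conj {a : ℂ} (ha : a ≠ 0) {n : ℕ} (hn : 2 ≤ n) :
    ∃ x : ℂ, x ≠ 0 ∧ x ^ n * a = conj x := by
  obtain ⟨k, rfl⟩ : ∃ k, n = k + 2 := ⟨n - 2, by omega⟩
  have hna : (‖a‖ : ℂ) ≠ 0 := by simpa using ha
  set ρ : ℝ := ‖a‖⁻¹ ^ ((k + 1 : ℕ) : ℝ)⁻¹
  have hρ_pos : 0 < ρ := by positivity
  have hρ : ρ ^ (k + 1) * ‖a‖ = 1 := by
    rw [Real.rpow_inv_natCast_pow (by positivity) k.succ_ne_zero, inv_mul_cancel₀ (by simpa using ha)]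
  obtain ⟨w, hw⟩ := IsAlgClosed.exists_pow_nat_eq (conj a / ‖a‖) (k + 2).succ_pos
  have hw_norm : ‖w‖ = 1 := by
    rw [← pow_eq_one_iff_of_nonneg (norm_nonneg w) (k + 2).succ_ne_zero, ← norm_pow, hw,
      norm_div, Complex.norm_conj, Complex.norm_real, norm_norm, div_self (by simpa using ha)]
  have hw0 : w ≠ 0 := norm_ne_zero_iff.mp (by simp [hw_norm])
  have hw_conj : w * conj w = 1 := by simp [Complex.mul_conj', hw_norm]
  refine ⟨ρ * w, mul_ne_zero (by exact_mod_cast hρ_pos.ne') hw0, mul_right_cancel₀ hw0 ?_⟩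
  have hρC : (ρ : ℂ) ^ (k + 1) * ‖a‖ = 1 := by exact_mod_cast hρ
  calc (ρ * w : ℂ) ^ (k + 2) * a * w = ρ * (ρ ^ (k + 1) * (w ^ (k + 3) * a)) := by ring
    _ = ρ * (ρ ^ (k + 1) * ‖a‖) := by rw [hw, div_mul_eq_mul_div, Complex.conj_mul', sq, mul_div_assoc, div_self hna, mul_one]
    _ = conj (ρ * w) * w := by rw [hρC, map_mul, Complex.conj_ofReal, mul_assoc, mul_comm (conj w), hw_conj, mul_one]

lemma exists_anti_fixed_point_iff {a b c : ℂ} {n : ℕ} (hn : 2 ≤ n) :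
    (∃ x : ℂ, x ≠ 0 ∧ x ^ n * a = conj x ∧ x ^ n * b = conj (x * c)) ↔
      conj c * a = b ∧ a ≠ 0 := by
  constructor
  · rintro ⟨x, hx, ha, hb⟩
    have ha0 : a ≠ 0 := by
      rintro rfl
      exact hx (by simpa using ha.symm)
    refine ⟨mul_left_cancel₀ (pow_ne_zero n hx) ?_, ha0⟩
    rw [hb, map_mul, ← ha]
    ring
  · rintro ⟨hab, ha⟩
    obtain ⟨x, hx, hxa⟩ := exists_pow_mul_eq_conj ha hn
    refine ⟨x, hx, hxa, ?_⟩
    rw [← hab, map_mul, ← hxa]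
    ring

lemma sum_mul_pow_mul_mul_pow {R : Type*} [CommSemiring R] {d : ℕ} (c : Fin d → R) (x z : R) :
    ∑ j : Fin d, c j * x ^ (d - 1 - (j : ℕ)) * (x * z) ^ (j : ℕ) =
      x ^ (d - 1) * ∑ j : Fin d, c j * z ^ (j : ℕ) := by
  rw [Finset.mul_sum]
  refine Finset.sum_congr rfl fun j _ => ?_
  rw [mul_pow, ← pow_sub_mul_pow x (Nat.le_sub_one_of_lt j.isLt)]
  ring

/-- For d ≥ 3, a point z ∈ ℂ corresponds to a nonzero anti-fixed point
(x₀, x₀z) of S × ⊗^{d−1}x = conj(x) iff conj(z)·q(z) = p(z) and q(z) ≠ 0. -/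
theorem stmt_12 (d : ℕ) (hd : 3 ≤ d) (s : Fin (d + 1) → ℂ)
    (F₀ F₁ : ℂ → ℂ → ℂ) (p q : ℂ → ℂ)
    (hF₀ : ∀ x₀ x₁, F₀ x₀ x₁ = ∑ j : Fin d, ((d - 1).choose j : ℂ) * s j.castSucc *
        x₀ ^ (d - 1 - (j : ℕ)) * x₁ ^ (j : ℕ))
    (hF₁ : ∀ x₀ x₁, F₁ x₀ x₁ = ∑ j : Fin d, ((d - 1).choose j : ℂ) * s j.succ *
        x₀ ^ (d - 1 - (j : ℕ)) * x₁ ^ (j : ℕ))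
    (hp : ∀ z, p z = ∑ j : Fin d, ((d - 1).choose j : ℂ) * s j.succ * z ^ (j : ℕ))
    (hq : ∀ z, q z = ∑ j : Fin d, ((d - 1).choose j : ℂ) * s j.castSucc * z ^ (j : ℕ)) :
    ∀ z : ℂ,
      ((∃ x₀ : ℂ, x₀ ≠ 0 ∧ F₀ x₀ (x₀ * z) = (starRingEnd ℂ) x₀ ∧
          F₁ x₀ (x₀ * z) = (starRingEnd ℂ) (x₀ * z)) ↔
        ((starRingEnd ℂ) z * q z = p z ∧ q z ≠ 0)) := by
  intro z
  have hF₀z : ∀ x₀, F₀ x₀ (x₀ * z) = x₀ ^ (d - 1) * q z := fun x₀ => by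
    rw [hF₀, hq, sum_mul_pow_mul_mul_pow]
  have hF₁z : ∀ x₀, F₁ x₀ (x₀ * z) = x₀ ^ (d - 1) * p z := fun x₀ => by
    rw [hF₁, hp, sum_mul_pow_mul_mul_pow]
  simp only [hF₀z, hF₁z]
  exact exists_anti_fixed_point_iff (by omega)
end

section
/- Let d ≥ 1 be an integer and s = (s_0,…,s_d) ∈ ℂ^{d+1}. Define the functions on ℂ: p(z) = Σ_{j=0}^{d−1} C(d−1,j) s_{j+1} z^{j}, q(z) = Σ_{j=0}^{d−1} C(d−1,j) s_j z^{j}, u(z) = Σ_{j=0}^{d−1} C(d−1,j) conj(s_{j+1}) p(z)^{j} q(z)^{d−1−j}, v(z) = Σ_{j=0}^{d−1} C(d−1,j) conj(s_j) p(z)^{j} q(z)^{d−1−j}. Then for every z ∈ ℂ with conj(z)·q(z) = p(z) one has z·v(z) = u(z); moreover, if in addition q(z) = 0, then u(z) = 0 and v(z) = 0. -/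
/-- If conj(z)·q(z) = p(z), then z·v(z) = u(z); moreover if in addition
q(z) = 0 then u(z) = 0 and v(z) = 0.  (That is, R ⊆ R₁.) -/
theorem stmt_13 (d : ℕ) (hd : 1 ≤ d) (s : Fin (d + 1) → ℂ)
    (p q u v : ℂ → ℂ)
    (hp : ∀ z, p z = ∑ j : Fin d, ((d - 1).choose j : ℂ) * s j.succ * z ^ (j : ℕ))
    (hq : ∀ z, q z = ∑ j : Fin d, ((d - 1).choose j : ℂ) * s j.castSucc * z ^ (j : ℕ))
    (hu : ∀ z, u z = ∑ j : Fin d, ((d - 1).choose j : ℂ) * (starRingEnd ℂ) (s j.succ) *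
        p z ^ (j : ℕ) * q z ^ (d - 1 - (j : ℕ)))
    (hv : ∀ z, v z = ∑ j : Fin d, ((d - 1).choose j : ℂ) * (starRingEnd ℂ) (s j.castSucc) *
        p z ^ (j : ℕ) * q z ^ (d - 1 - (j : ℕ))) :
    ∀ z : ℂ, (starRingEnd ℂ) z * q z = p z →
      z * v z = u z ∧ (q z = 0 → u z = 0 ∧ v z = 0) := by
  intro z h
  have key : ∀ c : Fin d → ℂ,
      (∑ j : Fin d, ((d - 1).choose j : ℂ) * (starRingEnd ℂ) (c j) *
        p z ^ (j : ℕ) * q z ^ (d - 1 - (j : ℕ)))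
      = q z ^ (d - 1) *
        (starRingEnd ℂ) (∑ j : Fin d, ((d - 1).choose j : ℂ) * c j * z ^ (j : ℕ)) := by
    intro c
    rw [map_sum, Finset.mul_sum]
    refine Finset.sum_congr rfl ?_
    intro j _
    have hj : (j : ℕ) + (d - 1 - (j : ℕ)) = d - 1 := by
      have := j.isLt; omega
    have hC : (starRingEnd ℂ) (((d - 1).choose j : ℕ) : ℂ) = (((d - 1).choose j : ℕ) : ℂ) :=
      map_natCast _ _
    rw [map_mul, map_mul, map_pow, hC, ← h, mul_pow]
    have hqq : q z ^ (d - 1) = q z ^ (j : ℕ) * q z ^ (d - 1 - (j : ℕ)) := by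
      rw [← pow_add, hj]
    rw [hqq]
    ring
  have hu' : u z = q z ^ (d - 1) * (starRingEnd ℂ) (p z) := by
    rw [hu, key (fun j => s j.succ), hp]
  have hv' : v z = q z ^ (d - 1) * (starRingEnd ℂ) (q z) := by
    rw [hv, key (fun j => s j.castSucc), hq]
  constructor
  · rw [hu', hv', ← h, map_mul, Complex.conj_conj]; ring
  · intro hq0
    have hp0 : p z = 0 := by rw [← h, hq0, mul_zero]
    constructor
    · rw [hu', hp0, map_zero, mul_zero]
    · rw [hv', hq0, map_zero, mul_zero]
end

section
/- Let d ≥ 3 be an integer and s = (s_0,…,s_d) ∈ ℂ^{d+1} with s_j ≠ 0 for some j ≤ d−1. Define on ℂ: p(z) = Σ_{j=0}^{d−1} C(d−1,j) s_{j+1} z^{j}, q(z) = Σ_{j=0}^{d−1} C(d−1,j) s_j z^{j}, u(z) = Σ_{j=0}^{d−1} C(d−1,j) conj(s_{j+1}) p(z)^{j} q(z)^{d−1−j}, v(z) = Σ_{j=0}^{d−1} C(d−1,j) conj(s_j) p(z)^{j} q(z)^{d−1−j}, and f_s(x₀,x₁) = Σ_{j=0}^{d} C(d,j) s_j x₀^{d−j}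 x₁^{j}. Assume there exists w ∈ ℂ with w·v(w) ≠ u(w). Then sSup{ |f_s(x₀,x₁)| : (x₀,x₁) ∈ ℂ², |x₀|² + |x₁|² = 1 } = sSup( {|s_d|} ∪ { |q(z)| · (1 + |z|²)^{−(d−2)/2} : z ∈ ℂ, conj(z)·q(z) = p(z) } ). -/
/-!
The maximum of `‖f‖` on the unit sphere of `ℂ²` is attained. At a maximizer with `x₀ = 0` its
value is `‖s_d‖`. Otherwise write `x = x₀ • (1, z)`: the value is `‖g z‖ / (1 + ‖z‖²)^(d/2)` with
`g = f(1, ·) = q + z p` and `g' = d p`, so `z` maximizes `‖g‖² / (1 + ‖·‖²)^d`. Differentiating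
along real lines through `z` gives `conj (g z) g'(z) (1 + ‖z‖²) = d ‖g z‖² conj z`, which for
`g z ≠ 0` says exactly `conj z q(z) = p(z)`; then `g z = (1 + ‖z‖²) q z` turns the value into
`‖q z‖ (1 + ‖z‖²)^(-(d-2)/2)`. If `g z = 0` the maximum is `0 = ‖s_d‖`. Conversely every element
of the right-hand set is a value of `‖f‖` on the sphere, so both suprema equal the maximum.
-/

open Complex ComplexConjugate Finset

section BinaryForm

variable {R : Type*} [CommSemiring R]

theorem sum_mul_pow_mul_slope_pow (d : ℕ) (c : Fin (d + 1) → R) (a w : R) :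
    ∑ j : Fin (d + 1), c j * a ^ (d - (j : ℕ)) * (w * a) ^ (j : ℕ) =
      a ^ d * ∑ j : Fin (d + 1), c j * w ^ (j : ℕ) := by
  rw [mul_sum]
  refine sum_congr rfl fun j _ => ?_
  rw [mul_pow, ← pow_sub_mul_pow a (Nat.lt_succ_iff.mp j.isLt)]
  ring

theorem sum_mul_zero_pow_mul_pow (d : ℕ) (c : Fin (d + 1) → R) (b : R) :
    ∑ j : Fin (d + 1), c j * 0 ^ (d - (j : ℕ)) * b ^ (j : ℕ) = c (Fin.last d) * b ^ d := by
  rw [Fin.sum_univ_castSucc, sum_eq_zero fun i _ => ?_]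
  · simp
  · simp [zero_pow (Nat.sub_ne_zero_of_lt i.isLt)]

theorem sum_choose_succ_mul_pow (n : ℕ) (a : Fin (n + 2) → R) (z : R) :
    ∑ j : Fin (n + 2), ((n + 1).choose j : R) * a j * z ^ (j : ℕ) =
      ∑ j : Fin (n + 1), (n.choose j : R) * a j.castSucc * z ^ (j : ℕ) +
        z * ∑ j : Fin (n + 1), (n.choose j : R) * a j.succ * z ^ (j : ℕ) := by
  have hlow : ∑ j : Fin (n + 1), (n.choose j : R) * a j.castSucc * z ^ (j : ℕ) =
      a 0 + ∑ i : Fin n, (n.choose (i + 1) : R) * a i.succ.castSucc * z ^ ((i : ℕ) + 1) := by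
    simp [Fin.sum_univ_succ]
  have htop : ∑ i : Fin (n + 1), (n.choose (i + 1) : R) * a i.succ * z ^ ((i : ℕ) + 1) =
      ∑ i : Fin n, (n.choose (i + 1) : R) * a i.succ.castSucc * z ^ ((i : ℕ) + 1) := by
    simp [Fin.sum_univ_castSucc]
  rw [Fin.sum_univ_succ, hlow, mul_sum, ← htop]
  simp only [Fin.val_zero, Nat.choose_zero_right, Nat.cast_one, one_mul, pow_zero, mul_one,
    Fin.val_succ, Nat.choose_succ_succ', Nat.cast_add, add_mul, sum_add_distrib]
  rw [add_comm (∑ i : Fin (n + 1), _), ← add_assoc]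
  congr 1
  exact sum_congr rfl fun i _ => by ring

end BinaryForm

theorem hasDerivAt_sum_choose_mul_pow {𝕜 : Type*} [NontriviallyNormedField 𝕜] (n : ℕ)
    (a : Fin (n + 2) → 𝕜) (z : 𝕜) :
    HasDerivAt (fun z => ∑ j : Fin (n + 2), ((n + 1).choose j : 𝕜) * a j * z ^ (j : ℕ))
      ((n + 1) * ∑ j : Fin (n + 1), (n.choose j : 𝕜) * a j.succ * z ^ (j : ℕ)) z := by
  have h := HasDerivAt.fun_sum (u := univ) fun (j : Fin (n + 2)) _ =>
    (hasDerivAt_pow (j : ℕ) z).const_mul (((n + 1).choose j : 𝕜) * a j)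
  refine h.congr_deriv ?_
  rw [Fin.sum_univ_succ, mul_sum]
  simp only [Fin.val_zero, Nat.cast_zero, zero_mul, mul_zero, zero_add, Fin.val_succ,
    Nat.add_sub_cancel]
  refine sum_congr rfl fun j _ => ?_
  have hchoose := congrArg (Nat.cast : ℕ → 𝕜) (Nat.add_one_mul_choose_eq n j)
  push_cast at hchoose ⊢
  linear_combination (-(a j.succ * z ^ (j : ℕ))) * hchoose

theorem Complex.eq_zero_of_forall_re_mul_eq_zero {w : ℂ} (h : ∀ c : ℂ, (c * w).re = 0) :
    w = 0 := by
  have h1 := h 1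
  have hI := h I
  simp only [one_mul, I_mul_re, neg_eq_zero] at h1 hI
  exact Complex.ext h1 hI

theorem conj_mul_deriv_eq_of_isLocalMax {G : ℂ → ℂ} {G' z₀ : ℂ} (n : ℕ)
    (hG : HasDerivAt G G' z₀)
    (hmax : IsLocalMax (fun w => ‖G w‖ ^ 2 / (1 + ‖w‖ ^ 2) ^ n) z₀) :
    conj (G z₀) * G' * (1 + ‖z₀‖ ^ 2 : ℝ) = (n * ‖G z₀‖ ^ 2 : ℝ) * conj z₀ := by
  refine sub_eq_zero.1 (Complex.eq_zero_of_forall_re_mul_eq_zero fun c => ?_)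
  have hline : HasDerivAt (fun t : ℝ => z₀ + t * c) c 0 := by
    simpa using ((((hasDerivAt_id (0 : ℂ)).mul_const c).const_add z₀).comp_ofReal (z := 0))
  have hG0 : HasDerivAt G G' (z₀ + ((0 : ℝ) : ℂ) * c) := by simpa using hG
  have hB0 : (1 + ‖z₀‖ ^ 2) ^ n ≠ 0 := by positivity
  have hρ := (hG0.comp (0 : ℝ) hline).norm_sq.div ((hline.norm_sq.const_add 1).fun_pow n)
    (by simpa using hB0)
  have hmax' : IsLocalMax ((fun w => ‖G w‖ ^ 2 / (1 + ‖w‖ ^ 2) ^ n) ∘ fun t : ℝ => z₀ + t * c)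
      0 := by
    refine IsLocalMax.comp_continuous ?_ hline.continuousAt
    simpa using hmax
  have h0 := hmax'.hasDerivAt_eq_zero hρ
  simp only [ofReal_zero, zero_mul, add_zero, Complex.inner, Function.comp_apply] at h0
  rw [div_eq_zero_iff, or_iff_left (pow_ne_zero _ hB0)] at h0
  have hpow : (n : ℝ) * (1 + ‖z₀‖ ^ 2) ^ (n - 1) * (1 + ‖z₀‖ ^ 2) = n * (1 + ‖z₀‖ ^ 2) ^ n := by
    rcases n with _ | n
    · simp
    · rw [Nat.add_sub_cancel, mul_assoc, ← pow_succ]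
  have hre : (c * (conj (G z₀) * G' * (1 + ‖z₀‖ ^ 2 : ℝ) - (n * ‖G z₀‖ ^ 2 : ℝ) * conj z₀)).re
      = (1 + ‖z₀‖ ^ 2) * (G' * c * conj (G z₀)).re - n * ‖G z₀‖ ^ 2 * (c * conj z₀).re := by
    rw [show c * (conj (G z₀) * G' * (1 + ‖z₀‖ ^ 2 : ℝ) - (n * ‖G z₀‖ ^ 2 : ℝ) * conj z₀)
        = (1 + ‖z₀‖ ^ 2 : ℝ) * (G' * c * conj (G z₀)) - (n * ‖G z₀‖ ^ 2 : ℝ) * (c * conj z₀) by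
      ring, sub_re, re_ofReal_mul, re_ofReal_mul]
  rw [hre]
  apply mul_left_cancel₀ hB0
  linear_combination (1 + ‖z₀‖ ^ 2) / 2 * h0 + ‖G z₀‖ ^ 2 * (c * conj z₀).re * hpow

theorem norm_eq_inv_sqrt_iff {a w : ℂ} :
    ‖a‖ = (√(1 + ‖w‖ ^ 2))⁻¹ ↔ ‖a‖ ^ 2 + ‖w * a‖ ^ 2 = 1 := by
  have hB : 0 < 1 + ‖w‖ ^ 2 := by positivity
  rw [← Real.sqrt_inv, eq_comm, Real.sqrt_eq_iff_eq_sq (by positivity) (norm_nonneg a),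
    eq_comm, ← one_div, eq_div_iff hB.ne', norm_mul]
  constructor <;> intro h <;> linear_combination h

theorem inv_sqrt_pow_sq (w : ℂ) (d : ℕ) :
    ((√(1 + ‖w‖ ^ 2))⁻¹ ^ d) ^ 2 = ((1 + ‖w‖ ^ 2) ^ d)⁻¹ := by
  rw [← pow_mul, mul_comm, pow_mul, inv_pow, Real.sq_sqrt (by positivity), inv_pow]

theorem mul_inv_sqrt_pow_eq_rpow (w : ℂ) (d : ℕ) :
    (1 + ‖w‖ ^ 2) * (√(1 + ‖w‖ ^ 2))⁻¹ ^ d = (1 + ‖w‖ ^ 2) ^ (-(((d : ℝ) - 2) / 2)) := by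
  have hB : 0 < 1 + ‖w‖ ^ 2 := by positivity
  rw [Real.sqrt_eq_rpow, ← Real.rpow_neg hB.le,
    ← Real.rpow_natCast ((1 + ‖w‖ ^ 2) ^ (-(1 / 2 : ℝ))) d, ← Real.rpow_mul hB.le,
    show -(((d : ℝ) - 2) / 2) = 1 + -(1 / 2) * d by ring, Real.rpow_add hB, Real.rpow_one]

theorem conj_mul_eq_of_isLocalMax {G P Q : ℂ → ℂ} {z₀ : ℂ} {d : ℕ} (hd : d ≠ 0)
    (hGPQ : G z₀ = Q z₀ + z₀ * P z₀) (hG : HasDerivAt G (d * P z₀) z₀)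
    (hmax : IsLocalMax (fun w => ‖G w‖ * (√(1 + ‖w‖ ^ 2))⁻¹ ^ d) z₀) (hG0 : G z₀ ≠ 0) :
    conj z₀ * Q z₀ = P z₀ := by
  have hmax_sq : IsLocalMax (fun w => ‖G w‖ ^ 2 / (1 + ‖w‖ ^ 2) ^ d) z₀ := by
    refine hmax.mono fun w hw => ?_
    simp only [div_eq_mul_inv, ← inv_sqrt_pow_sq, ← mul_pow]
    exact pow_le_pow_left₀ (by positivity) hw 2
  have h := conj_mul_deriv_eq_of_isLocalMax d hG hmax_sq
  push_cast at h
  rw [← mul_conj' (G z₀), ← mul_conj' z₀] at h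
  have hd' : (d : ℂ) ≠ 0 := Nat.cast_ne_zero.2 hd
  have hGc : conj (G z₀) ≠ 0 := (map_ne_zero _).2 hG0
  apply mul_left_cancel₀ (mul_ne_zero hd' hGc)
  linear_combination -h - d * conj (G z₀) * conj z₀ * hGPQ

theorem norm_add_mul_mul_inv_sqrt_pow {P Q z : ℂ} (d : ℕ) (hz : conj z * Q = P) :
    ‖Q + z * P‖ * (√(1 + ‖z‖ ^ 2))⁻¹ ^ d = ‖Q‖ * (1 + ‖z‖ ^ 2) ^ (-(((d : ℝ) - 2) / 2)) := by
  have hQP : Q + z * P = ((1 + ‖z‖ ^ 2 : ℝ) : ℂ) * Q := by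
    rw [← hz]
    push_cast
    linear_combination Q * mul_conj' z
  rw [hQP, norm_mul, Complex.norm_of_nonneg (by positivity), ← mul_inv_sqrt_pow_eq_rpow]
  ring

def antiFixedValues (c : ℂ) (P Q : ℂ → ℂ) (d : ℕ) : Set ℝ :=
  {‖c‖} ∪
    {r | ∃ z : ℂ, conj z * Q z = P z ∧ r = ‖Q z‖ * (1 + ‖z‖ ^ 2) ^ (-(((d : ℝ) - 2) / 2))}

def sphereNormValues (F : ℂ → ℂ → ℂ) : Set ℝ :=
  {r | ∃ x₀ x₁ : ℂ, ‖x₀‖ ^ 2 + ‖x₁‖ ^ 2 = 1 ∧ r = ‖F x₀ x₁‖}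

theorem exists_isGreatest_sphereNormValues {F : ℂ → ℂ → ℂ}
    (hF : Continuous (Function.uncurry F)) :
    ∃ x₀ x₁ : ℂ, ‖x₀‖ ^ 2 + ‖x₁‖ ^ 2 = 1 ∧ IsGreatest (sphereNormValues F) ‖F x₀ x₁‖ := by
  set K : Set (ℂ × ℂ) := {x | ‖x.1‖ ^ 2 + ‖x.2‖ ^ 2 = 1}
  have hK : IsCompact K := by
    refine (isCompact_closedBall (0 : ℂ × ℂ) 1).of_isClosed_subset
      (isClosed_eq (by fun_prop) continuous_const) fun x (hx : _ = _) => ?_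
    rw [mem_closedBall_zero_iff, Prod.norm_def]
    exact max_le (by nlinarith [norm_nonneg x.1]) (by nlinarith [norm_nonneg x.2])
  obtain ⟨x, hxK, hmax⟩ := hK.exists_isMaxOn ⟨(1, 0), by simp [K]⟩
    (continuous_norm.comp hF).continuousOn
  refine ⟨x.1, x.2, hxK, ⟨x.1, x.2, hxK, rfl⟩, ?_⟩
  rintro r ⟨y₀, y₁, hy, rfl⟩
  exact hmax (show (y₀, y₁) ∈ K from hy)

section Homogeneous

variable {F : ℂ → ℂ → ℂ} {G P Q : ℂ → ℂ} {d : ℕ} {c : ℂ}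

theorem mem_sphereNormValues_of_slope (hF : ∀ a w, F a (w * a) = a ^ d * G w) (w : ℂ) :
    ‖G w‖ * (√(1 + ‖w‖ ^ 2))⁻¹ ^ d ∈ sphereNormValues F := by
  set a : ℝ := (√(1 + ‖w‖ ^ 2))⁻¹
  have ha : ‖(a : ℂ)‖ = a := by simp [a]
  refine ⟨a, w * a, norm_eq_inv_sqrt_iff.1 ha, ?_⟩
  rw [hF, norm_mul, norm_pow, ha, mul_comm]

theorem norm_eq_of_sq_add_sq_eq_one (hF : ∀ a w, F a (w * a) = a ^ d * G w) {x₀ x₁ : ℂ}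
    (hx : ‖x₀‖ ^ 2 + ‖x₁‖ ^ 2 = 1) (hx₀ : x₀ ≠ 0) :
    ‖F x₀ x₁‖ = ‖G (x₁ / x₀)‖ * (√(1 + ‖x₁ / x₀‖ ^ 2))⁻¹ ^ d := by
  have hx₁ : x₁ = x₁ / x₀ * x₀ := (div_mul_cancel₀ x₁ hx₀).symm
  rw [hx₁] at hx
  conv_lhs => rw [hx₁, hF, norm_mul, norm_pow, norm_eq_inv_sqrt_iff.2 hx, mul_comm]

theorem antiFixedValues_subset (hF : ∀ a w, F a (w * a) = a ^ d * G w)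
    (hF0 : ∀ b, F 0 b = c * b ^ d) (hGPQ : ∀ z, G z = Q z + z * P z) :
    antiFixedValues c P Q d ⊆ sphereNormValues F := by
  rintro r (rfl | ⟨z, hz, rfl⟩)
  · exact ⟨0, 1, by simp, by simp [hF0]⟩
  · rw [← norm_add_mul_mul_inv_sqrt_pow d hz, ← hGPQ]
    exact mem_sphereNormValues_of_slope hF z

theorem mem_antiFixedValues_of_isGreatest (hF : ∀ a w, F a (w * a) = a ^ d * G w)
    (hF0 : ∀ b, F 0 b = c * b ^ d) (hGPQ : ∀ z, G z = Q z + z * P z) (hd : d ≠ 0)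
    (hG : ∀ z, HasDerivAt G (d * P z) z) {x₀ x₁ : ℂ} (hx : ‖x₀‖ ^ 2 + ‖x₁‖ ^ 2 = 1)
    (hgreat : IsGreatest (sphereNormValues F) ‖F x₀ x₁‖) :
    ‖F x₀ x₁‖ ∈ antiFixedValues c P Q d := by
  by_cases hx₀ : x₀ = 0
  · subst hx₀
    have hx₁ : ‖x₁‖ = 1 :=
      (pow_eq_one_iff_of_nonneg (norm_nonneg x₁) two_ne_zero).1 (by simpa using hx)
    left
    rw [hF0, norm_mul, norm_pow, hx₁, one_pow, mul_one, Set.mem_singleton_iff]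
  have hvalue := norm_eq_of_sq_add_sq_eq_one hF hx hx₀
  by_cases hG0 : G (x₁ / x₀) = 0
  · have hc : ‖c‖ ≤ ‖F x₀ x₁‖ := hgreat.2 (antiFixedValues_subset hF hF0 hGPQ (Or.inl rfl))
    rw [hvalue, hG0, norm_zero, zero_mul] at hc ⊢
    exact Or.inl (le_antisymm (norm_nonneg c) hc)
  have hmax : IsLocalMax (fun w => ‖G w‖ * (√(1 + ‖w‖ ^ 2))⁻¹ ^ d) (x₁ / x₀) :=
    Filter.Eventually.of_forall fun w => by
      dsimp only
      rw [← hvalue]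
      exact hgreat.2 (mem_sphereNormValues_of_slope hF w)
  have hanti := conj_mul_eq_of_isLocalMax hd (hGPQ _) (hG _) hmax hG0
  exact Or.inr ⟨x₁ / x₀, hanti, by rw [hvalue, hGPQ, norm_add_mul_mul_inv_sqrt_pow d hanti]⟩

theorem sSup_sphereNormValues_eq (hF : ∀ a w, F a (w * a) = a ^ d * G w)
    (hF0 : ∀ b, F 0 b = c * b ^ d) (hGPQ : ∀ z, G z = Q z + z * P z) (hd : d ≠ 0)
    (hFc : Continuous (Function.uncurry F)) (hG : ∀ z, HasDerivAt G (d * P z) z) :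
    sSup (sphereNormValues F) = sSup (antiFixedValues c P Q d) := by
  obtain ⟨x₀, x₁, hx, hgreat⟩ := exists_isGreatest_sphereNormValues hFc
  have hgreat' : IsGreatest (antiFixedValues c P Q d) ‖F x₀ x₁‖ :=
    ⟨mem_antiFixedValues_of_isGreatest hF hF0 hGPQ hd hG hx hgreat,
      fun r hr => hgreat.2 (antiFixedValues_subset hF hF0 hGPQ hr)⟩
  rw [hgreat.csSup_eq, hgreat'.csSup_eq]

end Homogeneous

theorem stmt_15_general (d : ℕ) (hd : 3 ≤ d) (s : Fin (d + 1) → ℂ)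
    (p q : ℂ → ℂ)
    (hp : ∀ z, p z = ∑ j : Fin d, ((d - 1).choose j : ℂ) * s j.succ * z ^ (j : ℕ))
    (hq : ∀ z, q z = ∑ j : Fin d, ((d - 1).choose j : ℂ) * s j.castSucc * z ^ (j : ℕ)) :
    sSup {r : ℝ | ∃ x₀ x₁ : ℂ, ‖x₀‖ ^ 2 + ‖x₁‖ ^ 2 = 1 ∧
        r = ‖∑ j : Fin (d + 1), (d.choose j : ℂ) * s j *
          x₀ ^ (d - (j : ℕ)) * x₁ ^ (j : ℕ)‖} =
    sSup ({‖s (Fin.last d)‖} ∪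
      {r : ℝ | ∃ z : ℂ, (starRingEnd ℂ) z * q z = p z ∧
        r = ‖q z‖ * (1 + ‖z‖ ^ 2) ^ (-(((d : ℝ) - 2) / 2))}) := by
  obtain ⟨n, rfl⟩ : ∃ n, d = n + 1 := ⟨d - 1, by omega⟩
  simp only [Nat.add_sub_cancel] at hp hq
  exact sSup_sphereNormValues_eq
    (G := fun z => ∑ j : Fin (n + 2), ((n + 1).choose j : ℂ) * s j * z ^ (j : ℕ))
    (fun a w => sum_mul_pow_mul_slope_pow _ _ a w)
    (fun b => by rw [sum_mul_zero_pow_mul_pow]; simp)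
    (fun z => by rw [hp, hq]; exact sum_choose_succ_mul_pow n s z)
    n.succ_ne_zero (by fun_prop)
    (fun z => by simpa [hp] using hasDerivAt_sum_choose_mul_pow n s z)

/-- Outside the exceptional family, the spectral norm of a symmetric
d-qubit equals the max of |s_d| and |q(z)|(1+|z|²)^{−(d−2)/2} over the anti-fixed
points z (conj(z)q(z) = p(z)). -/
theorem stmt_15 (d : ℕ) (hd : 3 ≤ d) (s : Fin (d + 1) → ℂ)
    (hs : ∃ j : Fin (d + 1), (j : ℕ) ≤ d - 1 ∧ s j ≠ 0)
    (p q u v : ℂ → ℂ)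
    (hp : ∀ z, p z = ∑ j : Fin d, ((d - 1).choose j : ℂ) * s j.succ * z ^ (j : ℕ))
    (hq : ∀ z, q z = ∑ j : Fin d, ((d - 1).choose j : ℂ) * s j.castSucc * z ^ (j : ℕ))
    (hu : ∀ z, u z = ∑ j : Fin d, ((d - 1).choose j : ℂ) * (starRingEnd ℂ) (s j.succ) *
        p z ^ (j : ℕ) * q z ^ (d - 1 - (j : ℕ)))
    (hv : ∀ z, v z = ∑ j : Fin d, ((d - 1).choose j : ℂ) * (starRingEnd ℂ) (s j.castSucc) *
        p z ^ (j : ℕ) * q z ^ (d - 1 - (j : ℕ)))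
    (hexc : ∃ w : ℂ, w * v w ≠ u w) :
    sSup {r : ℝ | ∃ x₀ x₁ : ℂ, ‖x₀‖ ^ 2 + ‖x₁‖ ^ 2 = 1 ∧
        r = ‖∑ j : Fin (d + 1), (d.choose j : ℂ) * s j *
          x₀ ^ (d - (j : ℕ)) * x₁ ^ (j : ℕ)‖} =
    sSup ({‖s (Fin.last d)‖} ∪
      {r : ℝ | ∃ z : ℂ, (starRingEnd ℂ) z * q z = p z ∧
        r = ‖q z‖ * (1 + ‖z‖ ^ 2) ^ (-(((d : ℝ) - 2) / 2))}) :=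
  stmt_15_general d hd s p q hp hq
end

section
/- Let d ≥ 3 be an integer and s = (s_0,…,s_d) ∈ ℝ^{d+1} with s_j ≠ 0 for some j ≤ d−1. Define on ℝ (equivalently, with real coefficients): p(t) = Σ_{j=0}^{d−1} C(d−1,j) s_{j+1} t^{j}, q(t) = Σ_{j=0}^{d−1} C(d−1,j) s_j t^{j}, u(t) = Σ_{j=0}^{d−1} C(d−1,j) s_{j+1} p(t)^{j} q(t)^{d−1−j}, v(t) = Σ_{j=0}^{d−1} C(d−1,j) s_j p(t)^{j} q(t)^{d−1−j}, and f_s(x₀,x₁) = Σ_{j=0}^{d} C(d,j) s_j x₀^{d−j} x₁^{j}. Assume there exists w ∈ ℂ with w·v(w) ≠ u(w) (where u, v are extended to ℂ using the same real coefficients). Then sSup{ |f_s(x₀,x₁)| : (x₀,x₁) ∈ ℝ², x₀² + x₁² = 1 } = sSup( {|s_d|} ∪ { |q(t)| · (1 + t²)^{−(d−2)/2} : t ∈ ℝ, t·q(t) = p(t) } ). -/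
/-!
The maximum of `|f_s|` on the unit circle is attained at some `(cos θ, sin θ)`, where the
derivative of `θ ↦ f_s (cos θ, sin θ)` vanishes. By Pascal's rule
`f_{d,s}(x, y) = x f_{d-1,s'}(x, y) + y f_{d-1,s''}(x, y)`, with `s'`, `s''` the first and the last
`d` coefficients, this derivative is `d (cos θ f_{d-1,s''} - sin θ f_{d-1,s'})`. If `cos θ = 0`
the value is `|s_d|`. Otherwise `t = tan θ` solves `t q(t) = p(t)`, as `q = f_{d-1,s'}(1, ·)` and
`p = f_{d-1,s''}(1, ·)`, so `f_s(1, t) = q(t) + t p(t) = (1 + t²) q(t)`; homogeneity and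
`cos² θ = (1 + t²)⁻¹` turn `|f_s(cos θ, sin θ)|` into `|q(t)| (1 + t²)^(-(d-2)/2)`. Conversely each
such value is attained at `(1, t) / √(1 + t²)`.
-/

open Finset Real Set

def binaryForm (n : ℕ) (s : Fin (n + 1) → ℝ) (x y : ℝ) : ℝ :=
  ∑ j : Fin (n + 1), (n.choose j : ℝ) * s j * x ^ (n - j) * y ^ (j : ℕ)

namespace binaryForm

theorem zero (s : Fin 1 → ℝ) (x y : ℝ) : binaryForm 0 s x y = s 0 := by
  simp [binaryForm]

theorem succ (n : ℕ) (s : Fin (n + 2) → ℝ) (x y : ℝ) :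
    binaryForm (n + 1) s x y =
      x * binaryForm n (fun j => s j.castSucc) x y + y * binaryForm n (fun j => s j.succ) x y := by
  have hy : y * binaryForm n (fun j => s j.succ) x y =
      ∑ j : Fin (n + 1),
        (n.choose j : ℝ) * s j.succ * x ^ (n + 1 - (j + 1)) * y ^ ((j : ℕ) + 1) := by
    simp only [binaryForm, mul_sum, Nat.add_sub_add_right]
    exact sum_congr rfl fun j _ => by ring
  have hx : x * binaryForm n (fun j => s j.castSucc) x y =
      s 0 * x ^ (n + 1) + ∑ j : Fin (n + 1),
        (n.choose (j + 1) : ℝ) * s j.succ * x ^ (n + 1 - (j + 1)) * y ^ ((j : ℕ) + 1) := by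
    rw [binaryForm, Fin.sum_univ_succ, Fin.sum_univ_castSucc (fun j : Fin (n + 1) => _ * _ * _ * _)]
    simp only [Fin.val_zero, Fin.val_last, Fin.val_succ, Fin.val_castSucc, Nat.choose_succ_self,
      Nat.cast_zero, zero_mul, add_zero, Nat.choose_zero_right, mul_add, mul_sum]
    congr 1
    · simp only [Nat.cast_one, Fin.castSucc_zero, one_mul, tsub_zero, pow_zero, mul_one, pow_succ]
      ring
    · refine sum_congr rfl fun j _ => ?_
      rw [show n + 1 - (j + 1) = n - (j + 1) + 1 by omega, pow_succ, Fin.succ_castSucc]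
      ring
  rw [hx, hy, binaryForm, Fin.sum_univ_succ]
  simp only [Fin.val_zero, Fin.val_succ, Nat.choose_succ_succ', Nat.choose_zero_right,
    Nat.cast_add, Nat.cast_one, add_mul, sum_add_distrib, one_mul, tsub_zero, pow_zero, mul_one]
  ring

theorem zero_left (n : ℕ) (s : Fin (n + 1) → ℝ) (y : ℝ) :
    binaryForm n s 0 y = s (Fin.last n) * y ^ n := by
  rw [binaryForm, Fin.sum_univ_castSucc, sum_eq_zero fun j _ => by
    rw [Fin.val_castSucc, zero_pow (by omega), mul_zero, zero_mul]]
  simp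

theorem mul_right (n : ℕ) (s : Fin (n + 1) → ℝ) (x t : ℝ) :
    binaryForm n s x (t * x) = x ^ n * binaryForm n s 1 t := by
  simp only [binaryForm, mul_sum, one_pow, mul_one]
  refine sum_congr rfl fun j _ => ?_
  rw [mul_pow, ← pow_sub_mul_pow x (Nat.lt_succ_iff.mp j.isLt)]
  ring

theorem hasDerivAt_comp (n : ℕ) (s : Fin (n + 2) → ℝ) {f g : ℝ → ℝ} {f' g' θ : ℝ}
    (hf : HasDerivAt f f' θ) (hg : HasDerivAt g g' θ) :
    HasDerivAt (fun θ => binaryForm (n + 1) s (f θ) (g θ))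
      ((n + 1) * (f' * binaryForm n (fun j => s j.castSucc) (f θ) (g θ) +
        g' * binaryForm n (fun j => s j.succ) (f θ) (g θ))) θ := by
  induction n with
  | zero =>
    simp only [succ, zero]
    exact ((hf.mul_const _).add (hg.mul_const _)).congr_deriv (by push_cast; ring)
  | succ n ih =>
    simp only [succ _ s]
    refine ((hf.mul (ih _)).add (hg.mul (ih _))).congr_deriv ?_
    simp only [succ, Fin.succ_castSucc]
    push_cast
    ring

theorem eq_one_add_sq_mul {n : ℕ} {s : Fin (n + 2) → ℝ} {t : ℝ}
    (ht : t * binaryForm n (fun j => s j.castSucc) 1 t = binaryForm n (fun j => s j.succ) 1 t) :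
    binaryForm (n + 1) s 1 t = (1 + t ^ 2) * binaryForm n (fun j => s j.castSucc) 1 t := by
  rw [succ, ← ht]
  ring

end binaryForm

theorem abs_pow_mul_eq_rpow {x a : ℝ} (ha : 0 < a) (h : x ^ 2 * a = 1) (m : ℕ) :
    |x| ^ m * a = a ^ (-(((m : ℝ) - 2) / 2)) := by
  have hx : |x| = a ^ (-(1 / 2 : ℝ)) := by
    rw [← sqrt_sq_eq_abs, eq_inv_of_mul_eq_one_left h, sqrt_eq_rpow, inv_rpow ha.le, rpow_neg ha.le]
  rw [hx, ← rpow_natCast, ← rpow_mul ha.le, ← rpow_add_one ha.ne']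
  ring_nf

theorem exists_cos_sin_eq_of_sq_add_sq_eq_one {x y : ℝ} (h : x ^ 2 + y ^ 2 = 1) :
    ∃ θ, cos θ = x ∧ sin θ = y := by
  have hz : ‖(⟨x, y⟩ : ℂ)‖ = 1 := by simp [Complex.norm_eq_sqrt_sq_add_sq, h]
  exact ⟨Complex.arg ⟨x, y⟩, by simpa [hz] using Complex.norm_mul_cos_arg ⟨x, y⟩,
    by simpa [hz] using Complex.norm_mul_sin_arg ⟨x, y⟩⟩

theorem setOf_sq_add_sq_eq_one_eq_range {α : Type*} (F : ℝ → ℝ → α) :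
    {r | ∃ x y : ℝ, x ^ 2 + y ^ 2 = 1 ∧ r = F x y} = range fun θ => F (cos θ) (sin θ) := by
  ext r
  constructor
  · rintro ⟨x, y, h, rfl⟩
    obtain ⟨θ, rfl, rfl⟩ := exists_cos_sin_eq_of_sq_add_sq_eq_one h
    exact ⟨θ, rfl⟩
  · rintro ⟨θ, rfl⟩
    exact ⟨cos θ, sin θ, cos_sq_add_sin_sq θ, rfl⟩

theorem isLocalExtr_of_forall_abs_le {α : Type*} [TopologicalSpace α] {f : α → ℝ} {a : α}
    (h : ∀ x, |f x| ≤ |f a|) : IsLocalExtr f a := by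
  rcases le_or_gt 0 (f a) with ha | ha
  · exact .inr <| .of_forall fun x => (le_abs_self _).trans ((h x).trans (abs_of_nonneg ha).le)
  · exact .inl <| .of_forall fun x => by linarith [neg_abs_le (f x), h x, abs_of_neg ha]

def circleValues (n : ℕ) (s : Fin (n + 1) → ℝ) : Set ℝ :=
  {r | ∃ x₀ x₁ : ℝ, x₀ ^ 2 + x₁ ^ 2 = 1 ∧ r = |binaryForm n s x₀ x₁|}

def criticalValues (n : ℕ) (s : Fin (n + 2) → ℝ) : Set ℝ :=
  {|s (Fin.last (n + 1))|} ∪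
    {r | ∃ t : ℝ,
      t * binaryForm n (fun j => s j.castSucc) 1 t = binaryForm n (fun j => s j.succ) 1 t ∧
      r = |binaryForm n (fun j => s j.castSucc) 1 t| *
        (1 + t ^ 2) ^ (-((((n + 1 : ℕ) : ℝ) - 2) / 2))}

theorem abs_binaryForm_of_critical {n : ℕ} {s : Fin (n + 2) → ℝ} {x t : ℝ}
    (hx : x ^ 2 + (t * x) ^ 2 = 1)
    (ht : t * binaryForm n (fun j => s j.castSucc) 1 t = binaryForm n (fun j => s j.succ) 1 t) :
    |binaryForm (n + 1) s x (t * x)| = |binaryForm n (fun j => s j.castSucc) 1 t| *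
      (1 + t ^ 2) ^ (-((((n + 1 : ℕ) : ℝ) - 2) / 2)) := by
  rw [binaryForm.mul_right, binaryForm.eq_one_add_sq_mul ht, abs_mul, abs_mul, abs_pow,
    abs_of_pos (by positivity : (0 : ℝ) < 1 + t ^ 2),
    ← abs_pow_mul_eq_rpow (x := x) (by positivity) (by linear_combination hx)]
  ring

theorem criticalValues_subset (n : ℕ) (s : Fin (n + 2) → ℝ) :
    criticalValues n s ⊆ circleValues (n + 1) s := by
  rintro r (hr | ⟨t, ht, rfl⟩)
  · refine ⟨0, 1, by norm_num, ?_⟩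
    rw [hr, binaryForm.zero_left, one_pow, mul_one]
  · have hx : (1 / √(1 + t ^ 2)) ^ 2 + (t * (1 / √(1 + t ^ 2))) ^ 2 = 1 := by
      field_simp
      rw [sq_sqrt (by positivity)]
    exact ⟨_, _, hx, (abs_binaryForm_of_critical hx ht).symm⟩

theorem abs_binaryForm_mem_criticalValues {n : ℕ} {s : Fin (n + 2) → ℝ} {x y : ℝ}
    (hxy : x ^ 2 + y ^ 2 = 1)
    (hcrit : x * binaryForm n (fun j => s j.succ) x y =
      y * binaryForm n (fun j => s j.castSucc) x y) :
    |binaryForm (n + 1) s x y| ∈ criticalValues n s := by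
  rcases eq_or_ne x 0 with rfl | hx
  · left
    have hy : |y| = 1 := (abs_eq zero_le_one).2 (by simpa using hxy)
    rw [mem_singleton_iff, binaryForm.zero_left, abs_mul, abs_pow, hy, one_pow, mul_one]
  · right
    obtain ⟨t, rfl⟩ : ∃ t, y = t * x := ⟨y / x, by field_simp⟩
    refine ⟨t, ?_, abs_binaryForm_of_critical hxy ?_⟩ <;>
    · rw [binaryForm.mul_right, binaryForm.mul_right] at hcrit
      apply mul_left_cancel₀ (pow_ne_zero (n + 1) hx)
      linear_combination -hcrit

theorem exists_isGreatest_circleValues (n : ℕ) (s : Fin (n + 2) → ℝ) :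
    ∃ M ∈ criticalValues n s, IsGreatest (circleValues (n + 1) s) M := by
  set G : ℝ → ℝ := fun θ => binaryForm (n + 1) s (cos θ) (sin θ)
  have hG (θ : ℝ) := binaryForm.hasDerivAt_comp n s (hasDerivAt_cos θ) (hasDerivAt_sin θ)
  have hrange : circleValues (n + 1) s = range fun θ => |G θ| :=
    setOf_sq_add_sq_eq_one_eq_range fun x y => |binaryForm (n + 1) s x y|
  have hcompact : IsCompact (range fun θ => |G θ|) :=
    Function.Periodic.compact_of_continuous (c := 2 * π) (fun θ => by simp [G])
      two_pi_pos.ne' (continuous_iff_continuousAt.2 fun θ => (hG θ).continuousAt).abs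
  obtain ⟨_, ⟨θ, rfl⟩, hmax⟩ := hcompact.exists_isGreatest (range_nonempty _)
  refine ⟨|G θ|, abs_binaryForm_mem_criticalValues (cos_sq_add_sin_sq θ) ?_,
    hrange ▸ ⟨⟨θ, rfl⟩, hmax⟩⟩
  have hderiv :=
    (hG θ).deriv ▸ (isLocalExtr_of_forall_abs_le fun φ => hmax ⟨φ, rfl⟩).deriv_eq_zero
  rcases mul_eq_zero.1 hderiv with h | h
  · exact absurd h (by positivity)
  · linear_combination h

theorem sSup_circleValues (n : ℕ) (s : Fin (n + 2) → ℝ) :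
    sSup (circleValues (n + 1) s) = sSup (criticalValues n s) := by
  obtain ⟨M, hM, hgreatest⟩ := exists_isGreatest_circleValues n s
  have hcritical : IsGreatest (criticalValues n s) M :=
    ⟨hM, fun _ hr => hgreatest.2 (criticalValues_subset n s hr)⟩
  rw [hgreatest.csSup_eq, hcritical.csSup_eq]

theorem stmt_17_general (d : ℕ) (hd : 3 ≤ d) (s : Fin (d + 1) → ℝ)
    (p q : ℝ → ℝ)
    (hp : ∀ t, p t = ∑ j : Fin d, ((d - 1).choose j : ℝ) * s j.succ * t ^ (j : ℕ))
    (hq : ∀ t, q t = ∑ j : Fin d, ((d - 1).choose j : ℝ) * s j.castSucc * t ^ (j : ℕ)) :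
    sSup {r : ℝ | ∃ x₀ x₁ : ℝ, x₀ ^ 2 + x₁ ^ 2 = 1 ∧
        r = |∑ j : Fin (d + 1), (d.choose j : ℝ) * s j * x₀ ^ (d - (j : ℕ)) * x₁ ^ (j : ℕ)|} =
    sSup ({|s (Fin.last d)|} ∪
      {r : ℝ | ∃ t : ℝ, t * q t = p t ∧
        r = |q t| * (1 + t ^ 2) ^ (-(((d : ℝ) - 2) / 2))}) := by
  obtain ⟨n, rfl⟩ : ∃ n, d = n + 1 := ⟨d - 1, by omega⟩
  obtain rfl : p = binaryForm n (fun j => s j.succ) 1 :=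
    funext fun t => by simp [hp, binaryForm]
  obtain rfl : q = binaryForm n (fun j => s j.castSucc) 1 :=
    funext fun t => by simp [hq, binaryForm]
  exact sSup_circleValues n s

/-- Real case: outside the exceptional family, the real spectral norm of
a real symmetric d-qubit equals the max of |s_d| and |q(t)|(1+t²)^{−(d−2)/2} over the
real solutions t of t·q(t) = p(t). -/
theorem stmt_17 (d : ℕ) (hd : 3 ≤ d) (s : Fin (d + 1) → ℝ)
    (hs : ∃ j : Fin (d + 1), (j : ℕ) ≤ d - 1 ∧ s j ≠ 0)
    (p q u v : ℝ → ℝ)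
    (hp : ∀ t, p t = ∑ j : Fin d, ((d - 1).choose j : ℝ) * s j.succ * t ^ (j : ℕ))
    (hq : ∀ t, q t = ∑ j : Fin d, ((d - 1).choose j : ℝ) * s j.castSucc * t ^ (j : ℕ))
    (hu : ∀ t, u t = ∑ j : Fin d, ((d - 1).choose j : ℝ) * s j.succ *
        p t ^ (j : ℕ) * q t ^ (d - 1 - (j : ℕ)))
    (hv : ∀ t, v t = ∑ j : Fin d, ((d - 1).choose j : ℝ) * s j.castSucc *
        p t ^ (j : ℕ) * q t ^ (d - 1 - (j : ℕ)))
    (pC qC uC vC : ℂ → ℂ)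
    (hpC : ∀ z, pC z = ∑ j : Fin d, ((d - 1).choose j : ℂ) * (s j.succ : ℂ) * z ^ (j : ℕ))
    (hqC : ∀ z, qC z = ∑ j : Fin d, ((d - 1).choose j : ℂ) * (s j.castSucc : ℂ) * z ^ (j : ℕ))
    (huC : ∀ z, uC z = ∑ j : Fin d, ((d - 1).choose j : ℂ) * (s j.succ : ℂ) *
        pC z ^ (j : ℕ) * qC z ^ (d - 1 - (j : ℕ)))
    (hvC : ∀ z, vC z = ∑ j : Fin d, ((d - 1).choose j : ℂ) * (s j.castSucc : ℂ) *
        pC z ^ (j : ℕ) * qC z ^ (d - 1 - (j : ℕ)))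
    (hexc : ∃ w : ℂ, w * vC w ≠ uC w) :
    sSup {r : ℝ | ∃ x₀ x₁ : ℝ, x₀ ^ 2 + x₁ ^ 2 = 1 ∧
        r = |∑ j : Fin (d + 1), (d.choose j : ℝ) * s j * x₀ ^ (d - (j : ℕ)) * x₁ ^ (j : ℕ)|} =
    sSup ({|s (Fin.last d)|} ∪
      {r : ℝ | ∃ t : ℝ, t * q t = p t ∧
        r = |q t| * (1 + t ^ 2) ^ (-(((d : ℝ) - 2) / 2))}) :=
  stmt_17_general d hd s p q hp hq
end
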